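/- arXiv:0904.1097 — 3 statements merged into one kernel-verified Lean document; each statement's English description precedes it below -/
import Mathlib

section
/- For every positive integer n and every type C opener-closer configuration (O,C) ⊆ [n] × [n], there exists a unique non-crossing set partition 𝓑 of type C_n and a unique non-nesting set partition 𝓑' of type C_n such that op(𝓑) = op(𝓑') = O and cl(𝓑) = cl(𝓑') = C. -/
open scoped Classical
noncomputable section

/-! ### Set partitions of type A -/

/-- A set partition of `[n] = {1,…,n}`: pairwise disjoint nonempty blocks covering `[n]`. -/
structure SetPartitionA (n : ℕ) where
  blocks : Finset (Finset ℕ)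
  nonempty : ∀ B ∈ blocks, B.Nonempty
  disj : ∀ B ∈ blocks, ∀ B' ∈ blocks, B ≠ B' → Disjoint B B'
  cover : ∀ i : ℕ, (∃ B ∈ blocks, i ∈ B) ↔ i ∈ Finset.Icc 1 n

/-- Two arcs `(i,j)`, `(i',j')` cross if `i<i'<j<j'` (in either order of the two arcs). -/
def ACross (a b : ℕ × ℕ) : Prop :=
  (a.1 < b.1 ∧ b.1 < a.2 ∧ a.2 < b.2) ∨ (b.1 < a.1 ∧ a.1 < b.2 ∧ b.2 < a.2)

/-- Two arcs `(i,j)`, `(i',j')` nest if `i<i'<j'<j` (in either order of the two arcs). -/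
def ANest (a b : ℕ × ℕ) : Prop :=
  (a.1 < b.1 ∧ b.1 < b.2 ∧ b.2 < a.2) ∨ (b.1 < a.1 ∧ a.1 < a.2 ∧ a.2 < b.2)

namespace SetPartitionA

variable {n : ℕ}

/-- Openers: elements of `[n]` that are not the maximum of their block. -/
def openers (P : SetPartitionA n) : Finset ℕ :=
  (Finset.Icc 1 n).filter fun i => ∃ B ∈ P.blocks, i ∈ B ∧ ∃ j ∈ B, i < j

/-- Closers: elements of `[n]` that are not the minimum of their block. -/
def closers (P : SetPartitionA n) : Finset ℕ :=
  (Finset.Icc 1 n).filter fun i => ∃ B ∈ P.blocks, i ∈ B ∧ ∃ j ∈ B, j < i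

/-- `(i,j)` is an arc: `i < j` are in the same block with no block element in between. -/
def IsArc (P : SetPartitionA n) (i j : ℕ) : Prop :=
  i < j ∧ ∃ B ∈ P.blocks, i ∈ B ∧ j ∈ B ∧ ∀ k ∈ B, ¬(i < k ∧ k < j)

/-- The finite set of arcs of `P`. -/
def arcs (P : SetPartitionA n) : Finset (ℕ × ℕ) :=
  ((Finset.Icc 1 n) ×ˢ (Finset.Icc 1 n)).filter fun p => P.IsArc p.1 p.2

/-- The number of crossings: pairs of arcs `(i,j)`, `(i',j')` with `i<i'<j<j'`. -/
def crossings (P : SetPartitionA n) : ℕ :=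
  ((P.arcs ×ˢ P.arcs).filter fun q =>
    q.1.1 < q.2.1 ∧ q.2.1 < q.1.2 ∧ q.1.2 < q.2.2).card

/-- The number of nestings: pairs of arcs `(i,j)`, `(i',j')` with `i<i'<j'<j`. -/
def nestings (P : SetPartitionA n) : ℕ :=
  ((P.arcs ×ˢ P.arcs).filter fun q =>
    q.1.1 < q.2.1 ∧ q.2.1 < q.2.2 ∧ q.2.2 < q.1.2).card

/-- The cardinality of a maximal crossing: largest set of mutually crossing arcs. -/
def maxCrossing (P : SetPartitionA n) : ℕ :=
  (P.arcs.powerset.filter fun S => ∀ a ∈ S, ∀ b ∈ S, a ≠ b → ACross a b).sup Finset.card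

/-- The cardinality of a maximal nesting: largest set of mutually nesting arcs. -/
def maxNesting (P : SetPartitionA n) : ℕ :=
  (P.arcs.powerset.filter fun S => ∀ a ∈ S, ∀ b ∈ S, a ≠ b → ANest a b).sup Finset.card

end SetPartitionA

/-! ### Set partitions of classical types B/C/D on `[±n]` -/

/-- Position of `i ∈ [±n]` in the type `C` nesting order `1<⋯<n<-n<⋯<-1`. -/
def nestOrd (n : ℕ) (i : ℤ) : ℤ := if 0 < i then i else 2 * n + 1 + i

/-- Position of `i ∈ [±n]` in the crossing order `1<⋯<n<-1<⋯<-n`. -/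
def crossOrd (n : ℕ) (i : ℤ) : ℤ := if 0 < i then i else (n : ℤ) - i

/-- Position of `i ∈ [±n] ∪ {0}` in the type `B` nesting order `1<⋯<n<0<-n<⋯<-1`. -/
def nestOrdB (n : ℕ) (i : ℤ) : ℤ :=
  if 0 < i then i else if i = 0 then (n : ℤ) + 1 else 2 * n + 2 + i

/-- The negative `-B` of a block. -/
def negSet (B : Finset ℤ) : Finset ℤ := B.image fun x => -x

/-- A set partition of type `B_n`/`C_n`: a set partition of `[±n]` with `B ∈ 𝓑 ↔ -B ∈ 𝓑`
and at most one block `B₀` with `B₀ = -B₀`. -/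
structure SetPartitionC (n : ℕ) where
  blocks : Finset (Finset ℤ)
  nonempty : ∀ B ∈ blocks, B.Nonempty
  disj : ∀ B ∈ blocks, ∀ B' ∈ blocks, B ≠ B' → Disjoint B B'
  cover : ∀ i : ℤ, (∃ B ∈ blocks, i ∈ B) ↔ (i ≠ 0 ∧ |i| ≤ (n : ℤ))
  symm : ∀ B ∈ blocks, negSet B ∈ blocks
  zeroBlock : ∀ B ∈ blocks, ∀ B' ∈ blocks, negSet B = B → negSet B' = B' → B = B'

/-- Endpoints of an arc, ordered by the crossing order. -/
def cpr (n : ℕ) (p : ℤ × ℤ) : ℤ × ℤ :=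
  (min (crossOrd n p.1) (crossOrd n p.2), max (crossOrd n p.1) (crossOrd n p.2))

/-- `p` crosses `q` with `p` coming first in the crossing order. -/
def CrossRel (n : ℕ) (p q : ℤ × ℤ) : Prop :=
  (cpr n p).1 < (cpr n q).1 ∧ (cpr n q).1 < (cpr n p).2 ∧ (cpr n p).2 < (cpr n q).2

/-- The two arcs `p`, `q` cross in the crossing diagram. -/
def Crosses (n : ℕ) (p q : ℤ × ℤ) : Prop := CrossRel n p q ∨ CrossRel n q p

/-- `p` nests over `q` in the nesting diagram (arcs written in nesting order). -/
def NestRel (n : ℕ) (p q : ℤ × ℤ) : Prop :=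
  nestOrd n p.1 < nestOrd n q.1 ∧ nestOrd n q.2 < nestOrd n p.2

/-- The two arcs `p`, `q` nest in the nesting diagram. -/
def Nests (n : ℕ) (p q : ℤ × ℤ) : Prop := NestRel n p q ∨ NestRel n q p

/-- `p` nests over `q` in the type `B` nesting diagram. -/
def NestRelB (n : ℕ) (p q : ℤ × ℤ) : Prop :=
  nestOrdB n p.1 < nestOrdB n q.1 ∧ nestOrdB n q.2 < nestOrdB n p.2

/-- The two arcs `p`, `q` nest in the type `B` nesting diagram. -/
def NestsB (n : ℕ) (p q : ℤ × ℤ) : Prop := NestRelB n p q ∨ NestRelB n q p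

/-- Exceptional pairs for type `B` crossings: both arcs have positive opener and negative
closer, and at least one closer is smaller in absolute value than its opener. -/
def ExcCross (p q : ℤ × ℤ) : Prop :=
  0 < p.1 ∧ p.2 < 0 ∧ 0 < q.1 ∧ q.2 < 0 ∧ (|p.2| < |p.1| ∨ |q.2| < |q.1|)

/-- Exceptional pairs for type `B` nestings: both arcs have positive opener (or begin at `0`)
and negative closer (or end at `0`), and at least one closer is smaller in absolute value
than its opener. -/
def ExcNest (p q : ℤ × ℤ) : Prop :=
  0 ≤ p.1 ∧ p.2 ≤ 0 ∧ 0 ≤ q.1 ∧ q.2 ≤ 0 ∧ (|p.2| < |p.1| ∨ |q.2| < |q.1|)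

/-- A block augmented by `0` if it is the zero block. -/
def augB (B : Finset ℤ) : Finset ℤ := if negSet B = B then insert 0 B else B

/-- The arc `p` contains `n`. -/
def ContainsN (n : ℕ) (p : ℤ × ℤ) : Prop := p.1 = (n : ℤ) ∨ p.2 = (n : ℤ)

/-- The arc `p` contains `-n`. -/
def ContainsNegN (n : ℕ) (p : ℤ × ℤ) : Prop := p.1 = -(n : ℤ) ∨ p.2 = -(n : ℤ)

namespace SetPartitionC

variable {n : ℕ}

/-- The ground set `[±n]` as a finset of integers. -/
def pmn (n : ℕ) : Finset ℤ := (Finset.Icc (-(n : ℤ)) (n : ℤ)).erase 0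

/-- `(i,j)` is an arc: `i`, `j` are consecutive elements of a block in the nesting order. -/
def IsArc (P : SetPartitionC n) (i j : ℤ) : Prop :=
  nestOrd n i < nestOrd n j ∧ ∃ B ∈ P.blocks, i ∈ B ∧ j ∈ B ∧
    ∀ k ∈ B, ¬(nestOrd n i < nestOrd n k ∧ nestOrd n k < nestOrd n j)

/-- The finite set of arcs of `P` (written in nesting order). -/
def arcs (P : SetPartitionC n) : Finset (ℤ × ℤ) :=
  (pmn n ×ˢ pmn n).filter fun p => P.IsArc p.1 p.2

/-- Openers: positive elements that are not maximal in their block w.r.t. the nesting order. -/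
def openers (P : SetPartitionC n) : Finset ℤ :=
  (Finset.Icc 1 (n : ℤ)).filter fun i =>
    ∃ B ∈ P.blocks, i ∈ B ∧ ∃ j ∈ B, nestOrd n i < nestOrd n j

/-- Closers: positive elements that are not minimal in their block w.r.t. the nesting order. -/
def closers (P : SetPartitionC n) : Finset ℤ :=
  (Finset.Icc 1 (n : ℤ)).filter fun i =>
    ∃ B ∈ P.blocks, i ∈ B ∧ ∃ j ∈ B, nestOrd n j < nestOrd n i

/-- The number of crossings of a type `C` set partition. -/
def crossings (P : SetPartitionC n) : ℕ :=
  ((P.arcs ×ˢ P.arcs).filter fun q => CrossRel n q.1 q.2).card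

/-- The number of nestings of a type `C` set partition. -/
def nestings (P : SetPartitionC n) : ℕ :=
  ((P.arcs ×ˢ P.arcs).filter fun q => NestRel n q.1 q.2).card

/-- The number of crossings among pairs of arcs that both have positive opener. -/
def crossingsPos (P : SetPartitionC n) : ℕ :=
  (((P.arcs.filter fun p => 0 < p.1) ×ˢ (P.arcs.filter fun p => 0 < p.1)).filter
    fun q => CrossRel n q.1 q.2).card

/-- The number of nestings among pairs of arcs that both have positive opener. -/
def nestingsPos (P : SetPartitionC n) : ℕ :=
  (((P.arcs.filter fun p => 0 < p.1) ×ˢ (P.arcs.filter fun p => 0 < p.1)).filter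
    fun q => NestRel n q.1 q.2).card

/-- The cardinality of a maximal crossing. -/
def maxCrossing (P : SetPartitionC n) : ℕ :=
  (P.arcs.powerset.filter fun S => ∀ a ∈ S, ∀ b ∈ S, a ≠ b → Crosses n a b).sup Finset.card

/-- The cardinality of a maximal nesting. -/
def maxNesting (P : SetPartitionC n) : ℕ :=
  (P.arcs.powerset.filter fun S => ∀ a ∈ S, ∀ b ∈ S, a ≠ b → Nests n a b).sup Finset.card

/-! ### Type B notions -/

/-- `(i,j)` is a type `B` nesting arc: consecutive elements of an augmented block in the
type `B` nesting order. -/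
def IsArcB (P : SetPartitionC n) (i j : ℤ) : Prop :=
  nestOrdB n i < nestOrdB n j ∧ ∃ B ∈ P.blocks, i ∈ augB B ∧ j ∈ augB B ∧
    ∀ k ∈ augB B, ¬(nestOrdB n i < nestOrdB n k ∧ nestOrdB n k < nestOrdB n j)

/-- The finite set of type `B` nesting arcs of `P`. -/
def arcsB (P : SetPartitionC n) : Finset (ℤ × ℤ) :=
  ((insert 0 (pmn n)) ×ˢ (insert 0 (pmn n))).filter fun p => P.IsArcB p.1 p.2

/-- The number of type `B` crossings. -/
def crossingsB (P : SetPartitionC n) : ℕ :=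
  ((P.arcs ×ˢ P.arcs).filter fun q => CrossRel n q.1 q.2 ∧ ¬ExcCross q.1 q.2).card

/-- The number of type `B` nestings. -/
def nestingsB (P : SetPartitionC n) : ℕ :=
  ((P.arcsB ×ˢ P.arcsB).filter fun q => NestRelB n q.1 q.2 ∧ ¬ExcNest q.1 q.2).card

/-- Openers in type `B`: positive elements not maximal in their block
w.r.t. the type `B` nesting order. -/
def openersB (P : SetPartitionC n) : Finset ℤ :=
  (Finset.Icc 1 (n : ℤ)).filter fun i =>
    ∃ B ∈ P.blocks, i ∈ B ∧ ∃ j ∈ B, nestOrdB n i < nestOrdB n j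

/-- Closers in type `B`: positive elements not minimal in their block
w.r.t. the type `B` nesting order. -/
def closersB (P : SetPartitionC n) : Finset ℤ :=
  (Finset.Icc 1 (n : ℤ)).filter fun i =>
    ∃ B ∈ P.blocks, i ∈ B ∧ ∃ j ∈ B, nestOrdB n j < nestOrdB n i

/-- The cardinality of a maximal type `B` crossing. -/
def maxCrossingB (P : SetPartitionC n) : ℕ :=
  (P.arcs.powerset.filter fun S =>
    ∀ a ∈ S, ∀ b ∈ S, a ≠ b → Crosses n a b ∧ ¬ExcCross a b).sup Finset.card

/-- The cardinality of a maximal type `B` nesting. -/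
def maxNestingB (P : SetPartitionC n) : ℕ :=
  (P.arcsB.powerset.filter fun S =>
    ∀ a ∈ S, ∀ b ∈ S, a ≠ b → NestsB n a b ∧ ¬ExcNest a b).sup Finset.card

/-! ### Type D notions -/

/-- A type `C` set partition is of type `D` if the zero block, when present, is not a single
pair `{i,-i}`. -/
def IsTypeD (P : SetPartitionC n) : Prop :=
  ∀ B ∈ P.blocks, negSet B = B → B.card ≠ 2

/-- The arcs starting in `{1,…,n-1}` and ending in the negative of an element of `{1,…,n-1}`. -/
def pnArcs (P : SetPartitionC n) : Finset (ℤ × ℤ) :=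
  P.arcs.filter fun p => 0 < p.1 ∧ p.1 < (n : ℤ) ∧ -(n : ℤ) < p.2 ∧ p.2 < 0

/-- The index `l` of an arc `a = (i_l, -j_l)` in the list of `pnArcs` ordered by openers. -/
def dRank (P : SetPartitionC n) (a : ℤ × ℤ) : ℕ :=
  (P.pnArcs.filter fun b => b.1 ≤ a.1).card

/-- The crossings allowed in a non-crossing set partition of type `D`. -/
def AllowedCrossD (P : SetPartitionC n) (p q : ℤ × ℤ) : Prop :=
  (ContainsN n p ∧ q ∈ P.pnArcs ∧ P.pnArcs.card < 2 * P.dRank q) ∨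
  (ContainsN n q ∧ p ∈ P.pnArcs ∧ P.pnArcs.card < 2 * P.dRank p) ∨
  (ContainsNegN n p ∧ q ∈ P.pnArcs ∧ 2 * P.dRank q ≤ P.pnArcs.card) ∨
  (ContainsNegN n q ∧ p ∈ P.pnArcs ∧ 2 * P.dRank p ≤ P.pnArcs.card) ∨
  (ContainsN n p ∧ ContainsNegN n q) ∨
  (ContainsN n q ∧ ContainsNegN n p)

/-- `P` is a non-crossing set partition of type `D_n`. -/
def NonCrossingD (P : SetPartitionC n) : Prop :=
  (∀ i : ℤ, 0 < i → P.IsArc i (-i) → i = n) ∧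
  (∀ p ∈ P.arcs, ∀ q ∈ P.arcs, Crosses n p q → P.AllowedCrossD p q) ∧
  (∀ p ∈ P.arcs, ContainsN n p →
    ∀ q ∈ P.pnArcs, P.pnArcs.card < 2 * P.dRank q → Crosses n p q) ∧
  (∀ p ∈ P.arcs, ContainsNegN n p →
    ∀ q ∈ P.pnArcs, 2 * P.dRank q ≤ P.pnArcs.card → Crosses n p q)

/-- The nestings (`p` over `q`) allowed in a non-nesting set partition of type `D`. -/
def AllowedNestD (P : SetPartitionC n) (p q : ℤ × ℤ) : Prop :=
  (0 < p.1 ∧ p.1 < q.1 ∧ q.1 < (n : ℤ) ∧ p.2 = -(n : ℤ) ∧ q.2 = (n : ℤ)) ∨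
  (q.1 = (n : ℤ) ∧ q.2 = -(n : ℤ) ∧ 0 < p.1 ∧ p.1 < (n : ℤ) ∧ -(n : ℤ) < p.2 ∧ p.2 < 0 ∧
    ∃ m : ℤ, 0 < m ∧ m < p.1 ∧ m < -p.2 ∧ P.IsArc m (n : ℤ))

/-- `P` is a non-nesting set partition of type `D_n`. -/
def NonNestingD (P : SetPartitionC n) : Prop :=
  (∀ i : ℤ, 0 < i → P.IsArc i (-i) → i = n) ∧
  (∀ p ∈ P.arcs, ∀ q ∈ P.arcs, NestRel n p q → P.AllowedNestD p q)

end SetPartitionC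

/-! ### The staircase polyomino and chains in fillings -/

/-- The cells of the staircase polyomino `P_n`: `(c,r)` with `1 ≤ c ≤ n`, `c ≤ r ≤ 2n-1`. -/
def cellsP (n : ℕ) : Finset (ℕ × ℕ) :=
  ((Finset.Icc 1 n) ×ˢ (Finset.Icc 1 (2 * n - 1))).filter fun p => p.1 ≤ p.2

/-- The length of the longest north-east chain among a set of (nonzero) cells:
columns strictly increase while rows strictly decrease. -/
def neLen (S : Finset (ℕ × ℕ)) : ℕ :=
  (S.powerset.filter fun T =>
    ∀ a ∈ T, ∀ b ∈ T, a ≠ b →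
      (a.1 < b.1 ∧ b.2 < a.2) ∨ (b.1 < a.1 ∧ a.2 < b.2)).sup Finset.card

/-- The length of the longest south-east chain among a set of (nonzero) cells:
columns and rows strictly increase, and the surrounding rectangle lies in the polyomino
(`a.1 ≤ b.2` for all cells `a`, `b` of the chain). -/
def seLen (S : Finset (ℕ × ℕ)) : ℕ :=
  (S.powerset.filter fun T =>
    (∀ a ∈ T, ∀ b ∈ T, a ≠ b →
      (a.1 < b.1 ∧ a.2 < b.2) ∨ (b.1 < a.1 ∧ b.2 < a.2)) ∧
    ∀ a ∈ T, ∀ b ∈ T, a.1 ≤ b.2).sup Finset.card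

namespace SetPartitionC

variable {n : ℕ}

/-- The cells filled with `1` in the nesting filling of the staircase polyomino: rows are
labelled from top to bottom by `2,…,n,-n,…,-1`; the cell in column `i` and row labelled `j`
is filled iff `(i,j)` is an arc with positive opener `i`. -/
def nestFill (P : SetPartitionC n) : Finset (ℕ × ℕ) :=
  (cellsP n).filter fun c => ∃ j : ℤ, P.IsArc (c.1 : ℤ) j ∧ nestOrd n j = (c.2 : ℤ) + 1

/-- The cells filled with `1` in the crossing filling of the staircase polyomino: rows are
labelled from top to bottom by `2,…,n,-1,…,-n`; the cell in column `i` and row labelled `j`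
is filled iff `(i,j)` is an arc with positive opener `i`. -/
def crossFill (P : SetPartitionC n) : Finset (ℕ × ℕ) :=
  (cellsP n).filter fun c => ∃ j : ℤ, P.IsArc (c.1 : ℤ) j ∧ crossOrd n j = (c.2 : ℤ) + 1

end SetPartitionC

/-! ### Triangulations of the symmetric 2n-gon and symmetric fans of Dyck paths -/

/-- `p` is a diagonal of the `2n`-gon with vertices labelled by `[±n]`, written with its two
(distinct) endpoints in crossing order. -/
def IsDiag (n : ℕ) (p : ℤ × ℤ) : Prop :=
  p.1 ≠ 0 ∧ p.2 ≠ 0 ∧ |p.1| ≤ (n : ℤ) ∧ |p.2| ≤ (n : ℤ) ∧ crossOrd n p.1 < crossOrd n p.2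

/-- Normalize a pair so that its endpoints are in crossing order. -/
def normD (n : ℕ) (p : ℤ × ℤ) : ℤ × ℤ :=
  if crossOrd n p.1 < crossOrd n p.2 then p else (p.2, p.1)

/-- `ω` contains `m` mutually crossing diagonals. -/
def HasMCross (n m : ℕ) (ω : Finset (ℤ × ℤ)) : Prop :=
  ∃ S ⊆ ω, S.card = m ∧ ∀ a ∈ S, ∀ b ∈ S, a ≠ b → Crosses n a b

/-- A type `C_n` `k`-triangulation: a symmetric set of diagonals with no `(k+1)`-crossing,
maximal with this property. -/
def IsTriangC (n k : ℕ) (ω : Finset (ℤ × ℤ)) : Prop :=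
  (∀ p ∈ ω, IsDiag n p) ∧
  (∀ p ∈ ω, normD n (-p.1, -p.2) ∈ ω) ∧
  ¬HasMCross n (k + 1) ω ∧
  ∀ d : ℤ × ℤ, IsDiag n d → d ∉ ω → HasMCross n (k + 1) (insert d ω)

/-- A Dyck path in the staircase polyomino starting at the top cell `(i,i)` of column `i`,
proceeding by unit south or west steps inside `P_n`, and ending on the main diagonal
`r = 2n - c`. -/
def IsDyckPath (n i : ℕ) (l : List (ℕ × ℕ)) : Prop :=
  l ≠ [] ∧ l.head? = some (i, i) ∧ (∀ c ∈ l, c ∈ cellsP n) ∧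
  l.Chain' (fun a b => (b.1 = a.1 ∧ b.2 = a.2 + 1) ∨ (b.1 + 1 = a.1 ∧ b.2 = a.2)) ∧
  ∀ c : ℕ × ℕ, l.getLast? = some c → c.2 = 2 * n - c.1

/-- A symmetric fan of `k` non-intersecting Dyck paths: the `i`-th path starts at cell
`(i,i)` and the paths are pairwise cell-disjoint. -/
def IsSymFan (n k : ℕ) (f : Fin k → List (ℕ × ℕ)) : Prop :=
  (∀ i : Fin k, IsDyckPath n ((i : ℕ) + 1) (f i)) ∧
  ∀ i j : Fin k, i ≠ j → ∀ c ∈ f i, c ∉ f j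

namespace RSAux

/-! ### Basic facts about the orders -/

/-- `i` is a ground element of `[±n]`. -/
def Gd (n : ℕ) (i : ℤ) : Prop := i ≠ 0 ∧ -(n : ℤ) ≤ i ∧ i ≤ (n : ℤ)

variable {n : ℕ}

lemma mem_pmn {i : ℤ} : i ∈ SetPartitionC.pmn n ↔ Gd n i := by
  simp only [SetPartitionC.pmn, Finset.mem_erase, Finset.mem_Icc, Gd]

lemma gd_neg {i : ℤ} (h : Gd n i) : Gd n (-i) := by
  obtain ⟨h1, h2, h3⟩ := h; exact ⟨by omega, by omega, by omega⟩

lemma mem_negSet {B : Finset ℤ} {j : ℤ} : j ∈ negSet B ↔ -j ∈ B := by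
  simp only [negSet, Finset.mem_image]
  constructor
  · rintro ⟨x, hx, rfl⟩; simpa
  · intro h; exact ⟨-j, h, by ring⟩

lemma nu_of_pos {i : ℤ} (h : 0 < i) : nestOrd n i = i := if_pos h

lemma nu_of_neg {i : ℤ} (h : i < 0) : nestOrd n i = 2 * n + 1 + i := if_neg (by omega)

lemma nu_bounds {i : ℤ} (h : Gd n i) :
    (0 < i ∧ nestOrd n i = i ∧ 1 ≤ nestOrd n i ∧ nestOrd n i ≤ n) ∨
    (i < 0 ∧ nestOrd n i = 2 * n + 1 + i ∧ (n : ℤ) + 1 ≤ nestOrd n i ∧ nestOrd n i ≤ 2 * n) := by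
  obtain ⟨h1, h2, h3⟩ := h
  rcases lt_or_gt_of_ne h1 with hi | hi
  · exact Or.inr ⟨hi, nu_of_neg hi, by rw [nu_of_neg hi]; omega, by rw [nu_of_neg hi]; omega⟩
  · exact Or.inl ⟨hi, nu_of_pos hi, by rw [nu_of_pos hi]; omega, by rw [nu_of_pos hi]; omega⟩

lemma nu_inj {i j : ℤ} (hi : Gd n i) (hj : Gd n j) (h : nestOrd n i = nestOrd n j) : i = j := by
  rcases nu_bounds (n := n) hi with ⟨_, e1, _, _⟩ | ⟨_, e1, _, _⟩ <;>
    rcases nu_bounds (n := n) hj with ⟨_, e2, _, _⟩ | ⟨_, e2, _, _⟩ <;> omega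

lemma nu_flip {i : ℤ} (hi : Gd n i) : nestOrd n (-i) = 2 * n + 1 - nestOrd n i := by
  rcases nu_bounds (n := n) hi with ⟨h, e1, _, _⟩ | ⟨h, e1, _, _⟩
  · rw [nu_of_neg (by omega : -i < 0)]; omega
  · rw [nu_of_pos (by omega : 0 < -i)]; omega

lemma ka_of_pos {i : ℤ} (h : 0 < i) : crossOrd n i = i := if_pos h

lemma ka_of_neg {i : ℤ} (h : i < 0) : crossOrd n i = (n : ℤ) - i := if_neg (by omega)

/-! ### Computing `cpr` for arcs -/

lemma cpr_pp {a b : ℤ} (ha : 0 < a) (hab : a < b) : cpr n (a, b) = (a, b) := by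
  simp only [cpr, ka_of_pos ha, ka_of_pos (by omega : (0:ℤ) < b)]
  rw [min_eq_left (by omega), max_eq_right (by omega)]

lemma cpr_pn {a b : ℤ} (ha : 0 < a) (han : a ≤ (n : ℤ)) (hb : b < 0) :
    cpr n (a, b) = (a, (n : ℤ) - b) := by
  simp only [cpr, ka_of_pos ha, ka_of_neg hb]
  rw [min_eq_left (by omega), max_eq_right (by omega)]

lemma cpr_nn {a b : ℤ} (hb : b < 0) (hab : a < b) : cpr n (a, b) = ((n : ℤ) - b, (n : ℤ) - a) := by
  simp only [cpr, ka_of_neg (by omega : a < 0), ka_of_neg hb]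
  rw [min_eq_right (by omega), max_eq_left (by omega)]

lemma not_crossRel_self (p : ℤ × ℤ) : ¬ CrossRel n p p := by
  intro h; exact absurd h.1 (lt_irrefl _)

/-- Sign trichotomy for an arc (in nesting order) with ground endpoints. -/
lemma arc_signs {a b : ℤ} (ha : Gd n a) (hb : Gd n b) (hab : nestOrd n a < nestOrd n b) :
    (0 < a ∧ 0 < b ∧ a < b) ∨ (0 < a ∧ b < 0) ∨ (a < 0 ∧ b < 0 ∧ a < b) := by
  rcases nu_bounds (n := n) ha with ⟨h1, e1, l1, u1⟩ | ⟨h1, e1, l1, u1⟩ <;>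
    rcases nu_bounds (n := n) hb with ⟨h2, e2, l2, u2⟩ | ⟨h2, e2, l2, u2⟩
  · exact Or.inl ⟨h1, h2, by omega⟩
  · exact Or.inr (Or.inl ⟨h1, h2⟩)
  · omega
  · exact Or.inr (Or.inr ⟨h1, h2, by omega⟩)

/-- Negating both arcs preserves crossing. -/
lemma crosses_neg {a b c d : ℤ} (ha : Gd n a) (hb : Gd n b) (hc : Gd n c) (hd : Gd n d)
    (hab : nestOrd n a < nestOrd n b) (hcd : nestOrd n c < nestOrd n d) :
    Crosses n (-b, -a) (-d, -c) ↔ Crosses n (a, b) (c, d) := by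
  have Ha := ha; have Hb := hb; have Hc := hc; have Hd := hd
  obtain ⟨_, _, _⟩ := Ha; obtain ⟨_, _, _⟩ := Hb; obtain ⟨_, _, _⟩ := Hc; obtain ⟨_, _, _⟩ := Hd
  rcases arc_signs ha hb hab with ⟨h1, h2, h3⟩ | ⟨h1, h2⟩ | ⟨h1, h2, h3⟩ <;>
    rcases arc_signs hc hd hcd with ⟨k1, k2, k3⟩ | ⟨k1, k2⟩ | ⟨k1, k2, k3⟩ <;>
      simp only [Crosses, CrossRel]
  all_goals first
    | rw [cpr_pp (show (0:ℤ) < a by omega) (show a < b by omega),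
          cpr_nn (show -a < 0 by omega) (show -b < -a by omega)]
    | rw [cpr_pn (show (0:ℤ) < a by omega) (show a ≤ (n:ℤ) by omega) (show b < 0 by omega),
          cpr_pn (show (0:ℤ) < -b by omega) (show -b ≤ (n:ℤ) by omega) (show -a < 0 by omega)]
    | rw [cpr_nn (show b < 0 by omega) (show a < b by omega),
          cpr_pp (show (0:ℤ) < -b by omega) (show -b < -a by omega)]
  all_goals first
    | rw [cpr_pp (show (0:ℤ) < c by omega) (show c < d by omega),
          cpr_nn (show -c < 0 by omega) (show -d < -c by omega)]
    | rw [cpr_pn (show (0:ℤ) < c by omega) (show c ≤ (n:ℤ) by omega) (show d < 0 by omega),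
          cpr_pn (show (0:ℤ) < -d by omega) (show -d ≤ (n:ℤ) by omega) (show -c < 0 by omega)]
    | rw [cpr_nn (show d < 0 by omega) (show c < d by omega),
          cpr_pp (show (0:ℤ) < -d by omega) (show -d < -c by omega)]
  all_goals dsimp only
  all_goals omega

lemma gd_iff_abs {i : ℤ} : Gd n i ↔ (i ≠ 0 ∧ |i| ≤ (n : ℤ)) := by
  unfold Gd; rw [abs_le]

/-! ### Matchings -/

/-- The axioms satisfied by the arc set of a type `C` set partition. -/
structure IsCMatch (n : ℕ) (M : Finset (ℤ × ℤ)) : Prop where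
  gd : ∀ p ∈ M, Gd n p.1 ∧ Gd n p.2
  inc : ∀ p ∈ M, nestOrd n p.1 < nestOrd n p.2
  fun1 : ∀ p ∈ M, ∀ q ∈ M, p.1 = q.1 → p = q
  fun2 : ∀ p ∈ M, ∀ q ∈ M, p.2 = q.2 → p = q
  msymm : ∀ p ∈ M, (-p.2, -p.1) ∈ M
  hzero : ∀ j j' : ℤ, 0 < j → 0 < j' → (j, -j) ∈ M → (j', -j') ∈ M → j = j'

def Step (M : Finset (ℤ × ℤ)) (i j : ℤ) : Prop := (i, j) ∈ M

def Reach (M : Finset (ℤ × ℤ)) : ℤ → ℤ → Prop := Relation.ReflTransGen (Step M)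

def Conn (M : Finset (ℤ × ℤ)) (i j : ℤ) : Prop := Reach M i j ∨ Reach M j i

variable {M : Finset (ℤ × ℤ)}

lemma step_gd (h : IsCMatch n M) {i j : ℤ} (hs : Step M i j) : Gd n i ∧ Gd n j :=
  h.gd (i, j) hs

lemma step_nu (h : IsCMatch n M) {i j : ℤ} (hs : Step M i j) : nestOrd n i < nestOrd n j :=
  h.inc (i, j) hs

lemma step_det1 (h : IsCMatch n M) {i j k : ℤ} (h1 : Step M i j) (h2 : Step M i k) : j = k := by
  have := h.fun1 (i, j) h1 (i, k) h2 rfl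
  exact congrArg Prod.snd this

lemma step_det2 (h : IsCMatch n M) {i j k : ℤ} (h1 : Step M j i) (h2 : Step M k i) : j = k := by
  have := h.fun2 (j, i) h1 (k, i) h2 rfl
  exact congrArg Prod.fst this

lemma reach_nu (h : IsCMatch n M) {i j : ℤ} (hr : Reach M i j) : nestOrd n i ≤ nestOrd n j := by
  induction hr with
  | refl => exact le_refl _
  | tail _ hbc ih => exact le_of_lt (lt_of_le_of_lt ih (step_nu h hbc))

lemma reach_gd_right (h : IsCMatch n M) {i j : ℤ} (hr : Reach M i j) : i = j ∨ Gd n j := by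
  induction hr with
  | refl => exact Or.inl rfl
  | tail _ hbc _ => exact Or.inr (step_gd h hbc).2

lemma reach_gd_left (h : IsCMatch n M) {i j : ℤ} (hr : Reach M i j) : i = j ∨ Gd n i := by
  rcases Relation.ReflTransGen.cases_head hr with he | ⟨c, hc, _⟩
  · exact Or.inl he
  · exact Or.inr (step_gd h hc).1

lemma reach_neg (h : IsCMatch n M) {i j : ℤ} (hr : Reach M i j) : Reach M (-j) (-i) := by
  induction hr with
  | refl => exact Relation.ReflTransGen.refl
  | tail _ hbc ih => exact Relation.ReflTransGen.head (h.msymm _ hbc) ih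

lemma reach_out (h : IsCMatch n M) {a b : ℤ} (hab : Reach M a b) :
    ∀ {c}, Reach M a c → Reach M b c ∨ Reach M c b := by
  induction hab using Relation.ReflTransGen.head_induction_on with
  | refl => exact fun hac => Or.inl hac
  | @head a d hstep htail ih =>
    intro c hac
    rcases Relation.ReflTransGen.cases_head hac with rfl | ⟨e, he, hec⟩
    · exact Or.inr (Relation.ReflTransGen.head hstep htail)
    · cases step_det1 h hstep he
      exact ih hec

lemma reach_in (h : IsCMatch n M) {a b : ℤ} (hba : Reach M b a) :
    ∀ {c}, Reach M c a → Reach M b c ∨ Reach M c b := by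
  induction hba with
  | refl => exact fun hca => Or.inr hca
  | @tail x y hbx hxy ih =>
    intro c hca
    rcases (Relation.ReflTransGen.cases_tail hca) with rfl | ⟨d, hcd, hdy⟩
    · exact Or.inl (hbx.tail hxy)
    · cases step_det2 h hxy hdy
      exact ih hcd

lemma conn_refl : Conn M i i := Or.inl Relation.ReflTransGen.refl

lemma conn_symm (hc : Conn M i j) : Conn M j i := hc.symm

lemma conn_of_step (hs : Step M i j) : Conn M i j :=
  Or.inl (Relation.ReflTransGen.single hs)

lemma conn_trans (h : IsCMatch n M) {i j k : ℤ} (h1 : Conn M i j) (h2 : Conn M j k) :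
    Conn M i k := by
  rcases h1 with h1 | h1 <;> rcases h2 with h2 | h2
  · exact Or.inl (h1.trans h2)
  · exact reach_in h h1 h2
  · exact reach_out h h1 h2
  · exact Or.inr (h2.trans h1)

lemma conn_neg (h : IsCMatch n M) {i j : ℤ} (hc : Conn M i j) : Conn M (-i) (-j) := by
  rcases hc with hr | hr
  · exact Or.inr (reach_neg h hr)
  · exact Or.inl (reach_neg h hr)

lemma conn_gd_of (h : IsCMatch n M) {i j : ℤ} (hi : Gd n i) (hc : Conn M i j) : Gd n j := by
  rcases hc with hr | hr
  · rcases reach_gd_right h hr with rfl | hg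
    exacts [hi, hg]
  · rcases reach_gd_left h hr with rfl | hg
    exacts [hi, hg]

lemma conn_to_reach (h : IsCMatch n M) {i j : ℤ} (hc : Conn M i j)
    (hlt : nestOrd n i < nestOrd n j) : Reach M i j := by
  rcases hc with hr | hr
  · exact hr
  · exact absurd (reach_nu h hr) (by omega)

lemma no_between (h : IsCMatch n M) {i j k : ℤ} (hm : (i, j) ∈ M) (hk : Conn M i k)
    (h1 : nestOrd n i < nestOrd n k) (h2 : nestOrd n k < nestOrd n j) : False := by
  have hr : Reach M i k := conn_to_reach h hk h1
  rcases Relation.ReflTransGen.cases_head hr with rfl | ⟨d, hd, hdk⟩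
  · omega
  · cases step_det1 h hd hm
    have := reach_nu h hdk
    omega

lemma consec_arc (h : IsCMatch n M) {i j : ℤ} (hc : Conn M i j)
    (hlt : nestOrd n i < nestOrd n j)
    (hnb : ∀ k, Conn M i k → ¬(nestOrd n i < nestOrd n k ∧ nestOrd n k < nestOrd n j)) :
    (i, j) ∈ M := by
  have hr : Reach M i j := conn_to_reach h hc hlt
  rcases Relation.ReflTransGen.cases_head hr with rfl | ⟨d, hd, hdj⟩
  · omega
  · by_cases hdj' : d = j
    · exact hdj' ▸ hd
    · exfalso
      have hgd : Gd n d := (step_gd h hd).2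
      have hgj : Gd n j := by
        rcases reach_gd_right h hdj with rfl | hg
        exacts [hgd, hg]
      have h1 : nestOrd n i < nestOrd n d := step_nu h hd
      have h2 : nestOrd n d ≤ nestOrd n j := reach_nu h hdj
      have h3 : nestOrd n d ≠ nestOrd n j := fun e => hdj' (nu_inj hgd hgj e)
      exact hnb d (conn_of_step hd) ⟨h1, by omega⟩

/-- Every symmetric connected class contains a diagonal arc `(j, -j)`. -/
lemma symm_class_diag (h : IsCMatch n M) {i : ℤ} (hi : Gd n i)
    (hs : ∀ x, Gd n x → (Conn M i x ↔ Conn M i (-x))) :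
    ∃ j, 0 < j ∧ Conn M i j ∧ (j, -j) ∈ M := by
  set Pos := (SetPartitionC.pmn n).filter (fun x => Conn M i x ∧ 0 < x) with hPos
  have hmem : ∀ x, x ∈ Pos ↔ (Gd n x ∧ Conn M i x ∧ 0 < x) := by
    intro x; simp [hPos, mem_pmn]
  have hne : Pos.Nonempty := by
    rcases lt_or_gt_of_ne hi.1 with hneg | hpos
    · exact ⟨-i, (hmem _).2 ⟨gd_neg hi, (hs i hi).1 conn_refl, by omega⟩⟩
    · exact ⟨i, (hmem _).2 ⟨hi, conn_refl, hpos⟩⟩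
  obtain ⟨j, hjP, hjmax⟩ := Finset.exists_max_image Pos id hne
  obtain ⟨hgj, hcj, hjpos⟩ := (hmem j).1 hjP
  have hjn : j ≤ (n : ℤ) := hgj.2.2
  refine ⟨j, hjpos, hcj, ?_⟩
  apply consec_arc h (conn_trans h (conn_symm hcj) ((hs j hgj).1 hcj))
  · rw [nu_of_pos hjpos, nu_of_neg (by omega : -j < 0)]; omega
  · intro k hck ⟨h1, h2⟩
    have hcik : Conn M i k := conn_trans h hcj hck
    have hgk : Gd n k := conn_gd_of h hgj hck
    rw [nu_of_pos hjpos] at h1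
    rw [nu_of_neg (by omega : -j < 0)] at h2
    rcases lt_or_gt_of_ne hgk.1 with hkneg | hkpos
    · have : -k ∈ Pos := (hmem _).2 ⟨gd_neg hgk, (hs k hgk).1 hcik, by omega⟩
      have := hjmax _ this
      rw [nu_of_neg hkneg] at h1 h2
      simp only [id] at this
      omega
    · have : k ∈ Pos := (hmem _).2 ⟨hgk, hcik, hkpos⟩
      have := hjmax _ this
      rw [nu_of_pos hkpos] at h1 h2
      simp only [id] at this
      omega

/-! ### Building a partition from a matching -/

def classOf (n : ℕ) (M : Finset (ℤ × ℤ)) (i : ℤ) : Finset ℤ :=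
  (SetPartitionC.pmn n).filter (fun j => Conn M i j)

lemma mem_classOf {i j : ℤ} : j ∈ classOf n M i ↔ Gd n j ∧ Conn M i j := by
  simp [classOf, mem_pmn]

lemma classOf_eq (h : IsCMatch n M) {i j : ℤ} (hc : Conn M i j) :
    classOf n M i = classOf n M j := by
  ext x
  rw [mem_classOf, mem_classOf]
  exact and_congr_right fun _ =>
    ⟨fun hx => conn_trans h (conn_symm hc) hx, fun hx => conn_trans h hc hx⟩

def buildP (n : ℕ) (M : Finset (ℤ × ℤ)) (h : IsCMatch n M) : SetPartitionC n where
  blocks := (SetPartitionC.pmn n).image (classOf n M)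
  nonempty := by
    intro B hB
    obtain ⟨x, hx, rfl⟩ := Finset.mem_image.1 hB
    exact ⟨x, mem_classOf.2 ⟨mem_pmn.1 hx, conn_refl⟩⟩
  disj := by
    intro B hB B' hB' hne
    obtain ⟨x, hx, rfl⟩ := Finset.mem_image.1 hB
    obtain ⟨y, hy, rfl⟩ := Finset.mem_image.1 hB'
    rw [Finset.disjoint_left]
    intro k hk hk'
    obtain ⟨_, hck⟩ := mem_classOf.1 hk
    obtain ⟨_, hck'⟩ := mem_classOf.1 hk'
    exact hne (classOf_eq h (conn_trans h hck (conn_symm hck')))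
  cover := by
    intro i
    constructor
    · rintro ⟨B, hB, hiB⟩
      obtain ⟨x, hx, rfl⟩ := Finset.mem_image.1 hB
      exact gd_iff_abs.1 (mem_classOf.1 hiB).1
    · intro hi
      have hg : Gd n i := gd_iff_abs.2 hi
      exact ⟨classOf n M i, Finset.mem_image_of_mem _ (mem_pmn.2 hg),
        mem_classOf.2 ⟨hg, conn_refl⟩⟩
  symm := by
    intro B hB
    obtain ⟨x, hx, rfl⟩ := Finset.mem_image.1 hB
    have : negSet (classOf n M x) = classOf n M (-x) := by
      ext j
      rw [mem_negSet, mem_classOf, mem_classOf]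
      constructor
      · rintro ⟨hg, hc⟩
        have := conn_neg h hc
        rw [neg_neg] at this
        exact ⟨by simpa using gd_neg hg, this⟩
      · rintro ⟨hg, hc⟩
        have := conn_neg h hc
        rw [neg_neg] at this
        exact ⟨gd_neg hg, this⟩
    rw [this]
    exact Finset.mem_image_of_mem _ (mem_pmn.2 (gd_neg (mem_pmn.1 hx)))
  zeroBlock := by
    intro B hB B' hB' hBs hB's
    obtain ⟨x, hx, rfl⟩ := Finset.mem_image.1 hB
    obtain ⟨y, hy, rfl⟩ := Finset.mem_image.1 hB'
    have hgx := mem_pmn.1 hx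
    have hgy := mem_pmn.1 hy
    have hsx : ∀ z, Gd n z → (Conn M x z ↔ Conn M x (-z)) := by
      intro z hz
      constructor
      · intro hc
        have : -z ∈ negSet (classOf n M x) := by rw [mem_negSet]; simpa using mem_classOf.2 ⟨hz, hc⟩
        rw [hBs] at this
        exact (mem_classOf.1 this).2
      · intro hc
        have : z ∈ negSet (classOf n M x) := by
          rw [mem_negSet]; exact mem_classOf.2 ⟨gd_neg hz, hc⟩
        rw [hBs] at this
        exact (mem_classOf.1 this).2
    have hsy : ∀ z, Gd n z → (Conn M y z ↔ Conn M y (-z)) := by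
      intro z hz
      constructor
      · intro hc
        have : -z ∈ negSet (classOf n M y) := by rw [mem_negSet]; simpa using mem_classOf.2 ⟨hz, hc⟩
        rw [hB's] at this
        exact (mem_classOf.1 this).2
      · intro hc
        have : z ∈ negSet (classOf n M y) := by
          rw [mem_negSet]; exact mem_classOf.2 ⟨gd_neg hz, hc⟩
        rw [hB's] at this
        exact (mem_classOf.1 this).2
    obtain ⟨j, hjp, hjc, hjm⟩ := symm_class_diag h hgx hsx
    obtain ⟨j', hjp', hjc', hjm'⟩ := symm_class_diag h hgy hsy
    cases h.hzero j j' hjp hjp' hjm hjm'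
    exact classOf_eq h (conn_trans h hjc (conn_symm hjc'))

lemma buildP_blocks (h : IsCMatch n M) :
    (buildP n M h).blocks = (SetPartitionC.pmn n).image (classOf n M) := rfl

lemma buildP_isArc (h : IsCMatch n M) {i j : ℤ} :
    (buildP n M h).IsArc i j ↔ (i, j) ∈ M := by
  constructor
  · rintro ⟨hlt, B, hB, hiB, hjB, hcons⟩
    obtain ⟨x, hx, rfl⟩ := Finset.mem_image.1 hB
    obtain ⟨hgi, hci⟩ := mem_classOf.1 hiB
    obtain ⟨hgj, hcj⟩ := mem_classOf.1 hjB
    apply consec_arc h (conn_trans h (conn_symm hci) hcj) hlt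
    intro k hck hbet
    have hgk : Gd n k := conn_gd_of h hgi hck
    exact hcons k (mem_classOf.2 ⟨hgk, conn_trans h hci hck⟩) hbet
  · intro hm
    have hgd := h.gd _ hm
    refine ⟨h.inc _ hm, classOf n M i,
      Finset.mem_image_of_mem _ (mem_pmn.2 hgd.1),
      mem_classOf.2 ⟨hgd.1, conn_refl⟩,
      mem_classOf.2 ⟨hgd.2, conn_of_step hm⟩, ?_⟩
    intro k hk ⟨h1, h2⟩
    exact no_between h hm (mem_classOf.1 hk).2 h1 h2

lemma buildP_arcs (h : IsCMatch n M) : (buildP n M h).arcs = M := by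
  ext p
  rw [SetPartitionC.arcs, Finset.mem_filter, Finset.mem_product]
  constructor
  · rintro ⟨_, hp⟩
    exact (buildP_isArc h).1 hp
  · intro hp
    have hgd := h.gd _ hp
    refine ⟨⟨mem_pmn.2 hgd.1, mem_pmn.2 hgd.2⟩, ?_⟩
    exact (buildP_isArc h).2 (by simpa using hp)

lemma buildP_openers (h : IsCMatch n M) {O C : Finset ℤ}
    (hO : O ⊆ Finset.Icc 1 (n : ℤ)) (hC : C ⊆ Finset.Icc 1 (n : ℤ))
    (hsrc : ∀ i : ℤ, (∃ j, (i, j) ∈ M) ↔ i ∈ O ∪ negSet C) :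
    (buildP n M h).openers = O := by
  ext x
  simp only [SetPartitionC.openers, Finset.mem_filter, Finset.mem_Icc]
  constructor
  · rintro ⟨⟨hx1, hx2⟩, B, hB, hxB, j, hjB, hlt⟩
    rw [buildP_blocks] at hB
    obtain ⟨w, hw, rfl⟩ := Finset.mem_image.1 hB
    obtain ⟨hgx, hcx⟩ := mem_classOf.1 hxB
    obtain ⟨hgj, hcj⟩ := mem_classOf.1 hjB
    have hr : Reach M x j := conn_to_reach h (conn_trans h (conn_symm hcx) hcj) hlt
    rcases Relation.ReflTransGen.cases_head hr with rfl | ⟨d, hd, _⟩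
    · omega
    · have := (hsrc x).1 ⟨d, hd⟩
      rcases Finset.mem_union.1 this with hmem | hmem
      · exact hmem
      · exfalso
        have := hC (mem_negSet.1 hmem)
        rw [Finset.mem_Icc] at this
        omega
  · intro hxO
    have hx := Finset.mem_Icc.1 (hO hxO)
    obtain ⟨j, hj⟩ := (hsrc x).2 (Finset.mem_union_left _ hxO)
    have hgd := h.gd _ hj
    refine ⟨⟨hx.1, hx.2⟩, classOf n M x,
      Finset.mem_image_of_mem _ (mem_pmn.2 hgd.1),
      mem_classOf.2 ⟨hgd.1, conn_refl⟩, j,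
      mem_classOf.2 ⟨hgd.2, conn_of_step hj⟩, h.inc _ hj⟩

lemma buildP_closers (h : IsCMatch n M) {O C : Finset ℤ}
    (hO : O ⊆ Finset.Icc 1 (n : ℤ)) (hC : C ⊆ Finset.Icc 1 (n : ℤ))
    (htgt : ∀ i : ℤ, (∃ j, (j, i) ∈ M) ↔ i ∈ C ∪ negSet O) :
    (buildP n M h).closers = C := by
  ext x
  simp only [SetPartitionC.closers, Finset.mem_filter, Finset.mem_Icc]
  constructor
  · rintro ⟨⟨hx1, hx2⟩, B, hB, hxB, j, hjB, hlt⟩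
    rw [buildP_blocks] at hB
    obtain ⟨w, hw, rfl⟩ := Finset.mem_image.1 hB
    obtain ⟨hgx, hcx⟩ := mem_classOf.1 hxB
    obtain ⟨hgj, hcj⟩ := mem_classOf.1 hjB
    have hr : Reach M j x := conn_to_reach h (conn_trans h (conn_symm hcj) hcx) hlt
    rcases Relation.ReflTransGen.cases_tail hr with rfl | ⟨d, _, hd⟩
    · omega
    · have := (htgt x).1 ⟨d, hd⟩
      rcases Finset.mem_union.1 this with hmem | hmem
      · exact hmem
      · exfalso
        have := hO (mem_negSet.1 hmem)
        rw [Finset.mem_Icc] at this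
        omega
  · intro hxC
    have hx := Finset.mem_Icc.1 (hC hxC)
    obtain ⟨j, hj⟩ := (htgt x).2 (Finset.mem_union_left _ hxC)
    have hgd := h.gd _ hj
    refine ⟨⟨hx.1, hx.2⟩, classOf n M x,
      Finset.mem_image_of_mem _ (mem_pmn.2 hgd.2),
      mem_classOf.2 ⟨hgd.2, conn_refl⟩, j,
      mem_classOf.2 ⟨hgd.1, conn_symm (conn_of_step hj)⟩, h.inc _ hj⟩

lemma buildP_crossings (h : IsCMatch n M)
    (hnx : ∀ p ∈ M, ∀ q ∈ M, ¬ CrossRel n p q) : (buildP n M h).crossings = 0 := by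
  unfold SetPartitionC.crossings
  rw [Finset.card_eq_zero, Finset.filter_eq_empty_iff]
  rintro ⟨p, q⟩ hpq
  rw [Finset.mem_product, buildP_arcs h] at hpq
  exact hnx _ hpq.1 _ hpq.2

lemma buildP_nestings (h : IsCMatch n M)
    (hnn : ∀ p ∈ M, ∀ q ∈ M, ¬ NestRel n p q) : (buildP n M h).nestings = 0 := by
  unfold SetPartitionC.nestings
  rw [Finset.card_eq_zero, Finset.filter_eq_empty_iff]
  rintro ⟨p, q⟩ hpq
  rw [Finset.mem_product, buildP_arcs h] at hpq
  exact hnn _ hpq.1 _ hpq.2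

/-! ### From partitions to matchings -/

variable {P : SetPartitionC n} {B B' : Finset ℤ}

lemma block_gd (hB : B ∈ P.blocks) {x : ℤ} (hx : x ∈ B) : Gd n x :=
  gd_iff_abs.2 ((P.cover x).1 ⟨B, hB, hx⟩)

lemma blocks_eq (hB : B ∈ P.blocks) (hB' : B' ∈ P.blocks) {x : ℤ}
    (hx : x ∈ B) (hx' : x ∈ B') : B = B' := by
  by_contra hne
  exact Finset.disjoint_left.1 (P.disj _ hB _ hB' hne) hx hx'

lemma succ_arc (hB : B ∈ P.blocks) {x j : ℤ} (hx : x ∈ B) (hj : j ∈ B)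
    (hlt : nestOrd n x < nestOrd n j) :
    ∃ s ∈ B, P.IsArc x s ∧ ∀ k ∈ B, nestOrd n x < nestOrd n k → nestOrd n s ≤ nestOrd n k := by
  have hne : (B.filter (fun k => nestOrd n x < nestOrd n k)).Nonempty :=
    ⟨j, Finset.mem_filter.2 ⟨hj, hlt⟩⟩
  obtain ⟨s, hs, hmin⟩ := Finset.exists_min_image _ (nestOrd n) hne
  rw [Finset.mem_filter] at hs
  refine ⟨s, hs.1, ⟨hs.2, B, hB, hx, hs.1, ?_⟩,
    fun k hk hlt' => hmin k (Finset.mem_filter.2 ⟨hk, hlt'⟩)⟩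
  rintro k hk ⟨h1, h2⟩
  have := hmin k (Finset.mem_filter.2 ⟨hk, h1⟩)
  omega

lemma pred_arc (hB : B ∈ P.blocks) {x j : ℤ} (hx : x ∈ B) (hj : j ∈ B)
    (hlt : nestOrd n j < nestOrd n x) :
    ∃ s ∈ B, P.IsArc s x := by
  have hne : (B.filter (fun k => nestOrd n k < nestOrd n x)).Nonempty :=
    ⟨j, Finset.mem_filter.2 ⟨hj, hlt⟩⟩
  obtain ⟨s, hs, hmax⟩ := Finset.exists_max_image _ (nestOrd n) hne
  rw [Finset.mem_filter] at hs
  refine ⟨s, hs.1, hs.2, B, hB, hs.1, hx, ?_⟩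
  rintro k hk ⟨h1, h2⟩
  have := hmax k (Finset.mem_filter.2 ⟨hk, h2⟩)
  omega

lemma isArc_neg {i j : ℤ} (h : P.IsArc i j) : P.IsArc (-j) (-i) := by
  obtain ⟨hlt, B, hB, hi, hj, hcons⟩ := h
  have hgi : Gd n i := block_gd hB hi
  have hgj : Gd n j := block_gd hB hj
  refine ⟨by rw [nu_flip hgj, nu_flip hgi]; omega, negSet B, P.symm B hB,
    by rw [mem_negSet, neg_neg]; exact hj, by rw [mem_negSet, neg_neg]; exact hi, ?_⟩
  rintro k hk ⟨h1, h2⟩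
  have hmk : -k ∈ B := mem_negSet.1 hk
  have hgmk : Gd n (-k) := block_gd hB hmk
  have hkk : nestOrd n k = 2 * n + 1 - nestOrd n (-k) := by
    have := nu_flip (n := n) hgmk
    rw [neg_neg] at this
    omega
  rw [nu_flip hgj] at h1
  rw [nu_flip hgi] at h2
  exact hcons (-k) hmk ⟨by omega, by omega⟩

lemma arcs_mem {i j : ℤ} : (i, j) ∈ P.arcs ↔ P.IsArc i j := by
  rw [SetPartitionC.arcs, Finset.mem_filter, Finset.mem_product]
  constructor
  · exact fun h => h.2
  · intro h
    obtain ⟨hlt, B, hB, hi, hj, _⟩ := id h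
    exact ⟨⟨mem_pmn.2 (block_gd hB hi), mem_pmn.2 (block_gd hB hj)⟩, h⟩

lemma arcs_cmatch (P : SetPartitionC n) : IsCMatch n P.arcs := by
  constructor
  · rintro ⟨i, j⟩ hp
    rw [SetPartitionC.arcs, Finset.mem_filter, Finset.mem_product] at hp
    exact ⟨mem_pmn.1 hp.1.1, mem_pmn.1 hp.1.2⟩
  · rintro ⟨i, j⟩ hp
    exact (arcs_mem.1 hp).1
  · rintro ⟨i, j⟩ hp ⟨i', j'⟩ hq he
    dsimp at he
    subst he
    obtain ⟨hlt, B, hB, hi, hj, hcons⟩ := arcs_mem.1 hp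
    obtain ⟨hlt', B', hB', hi', hj', hcons'⟩ := arcs_mem.1 hq
    cases blocks_eq hB hB' hi hi'
    have hgj : Gd n j := block_gd hB hj
    have hgj' : Gd n j' := block_gd hB hj'
    have e1 : ¬(nestOrd n i < nestOrd n j ∧ nestOrd n j < nestOrd n j') := hcons' j hj
    have e2 : ¬(nestOrd n i < nestOrd n j' ∧ nestOrd n j' < nestOrd n j) := hcons j' hj'
    have : nestOrd n j = nestOrd n j' := by omega
    rw [nu_inj hgj hgj' this]
  · rintro ⟨i, j⟩ hp ⟨i', j'⟩ hq he
    dsimp at he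
    subst he
    obtain ⟨hlt, B, hB, hi, hj, hcons⟩ := arcs_mem.1 hp
    obtain ⟨hlt', B', hB', hi', hj', hcons'⟩ := arcs_mem.1 hq
    cases blocks_eq hB hB' hj hj'
    have hgi : Gd n i := block_gd hB hi
    have hgi' : Gd n i' := block_gd hB hi'
    have e1 : ¬(nestOrd n i < nestOrd n i' ∧ nestOrd n i' < nestOrd n j) := hcons i' hi'
    have e2 : ¬(nestOrd n i' < nestOrd n i ∧ nestOrd n i < nestOrd n j) := hcons' i hi
    have : nestOrd n i = nestOrd n i' := by omega
    rw [nu_inj hgi hgi' this]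
  · rintro ⟨i, j⟩ hp
    exact arcs_mem.2 (isArc_neg (arcs_mem.1 hp))
  · intro j j' hj hj' hm hm'
    obtain ⟨hlt, B, hB, hiB, hjB, hcons⟩ := arcs_mem.1 hm
    obtain ⟨hlt', B', hB', hiB', hjB', hcons'⟩ := arcs_mem.1 hm'
    have hBsym : negSet B = B := by
      apply blocks_eq (P.symm B hB) hB (x := -j)
      · rw [mem_negSet, neg_neg]; exact hiB
      · exact hjB
    have hBsym' : negSet B' = B' := by
      apply blocks_eq (P.symm B' hB') hB' (x := -j')
      · rw [mem_negSet, neg_neg]; exact hiB'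
      · exact hjB'
    cases P.zeroBlock B hB B' hB' hBsym hBsym'
    have hgj : Gd n j := block_gd hB hiB
    have hgj' : Gd n j' := block_gd hB hiB'
    have h1 : ¬(nestOrd n j < nestOrd n j' ∧ nestOrd n j' < nestOrd n (-j)) := hcons j' hiB'
    have h2 : ¬(nestOrd n j' < nestOrd n j ∧ nestOrd n j < nestOrd n (-j'))  := hcons' j hiB
    rw [nu_of_pos hj, nu_of_pos hj', nu_of_neg (by omega : -j < 0)] at h1
    rw [nu_of_pos hj, nu_of_pos hj', nu_of_neg (by omega : -j' < 0)] at h2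
    have := hgj.2.2
    have := hgj'.2.2
    omega

lemma block_reach (hB : B ∈ P.blocks) : ∀ m : ℕ, ∀ x ∈ B, ∀ y ∈ B,
    nestOrd n x ≤ nestOrd n y → (nestOrd n y - nestOrd n x).toNat ≤ m → Reach P.arcs x y := by
  intro m
  induction m with
  | zero =>
    intro x hx y hy hle h0
    have : nestOrd n x = nestOrd n y := by omega
    cases nu_inj (block_gd hB hx) (block_gd hB hy) this
    exact Relation.ReflTransGen.refl
  | succ m ih =>
    intro x hx y hy hle hm
    rcases eq_or_lt_of_le hle with he | hlt
    · cases nu_inj (block_gd hB hx) (block_gd hB hy) he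
      exact Relation.ReflTransGen.refl
    · obtain ⟨s, hsB, hs, hmin⟩ := succ_arc hB hx hy hlt
      have hss : nestOrd n x < nestOrd n s := hs.1
      have hsy : nestOrd n s ≤ nestOrd n y := hmin y hy hlt
      exact Relation.ReflTransGen.head (arcs_mem.2 hs) (ih s hsB y hy hsy (by omega))

lemma reach_mem_fwd {x y : ℤ} (hr : Reach P.arcs x y) (hB : B ∈ P.blocks) (hx : x ∈ B) :
    y ∈ B := by
  induction hr with
  | refl => exact hx
  | tail hab hbc ih =>
    obtain ⟨_, B', hB', hb, hc, _⟩ := arcs_mem.1 hbc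
    cases blocks_eq hB hB' ih hb
    exact hc

lemma reach_mem_rev {x y : ℤ} (hr : Reach P.arcs y x) (hB : B ∈ P.blocks) (hx : x ∈ B) :
    y ∈ B := by
  induction hr with
  | refl => exact hx
  | tail hab hbc ih =>
    obtain ⟨_, B', hB', hb, hc, _⟩ := arcs_mem.1 hbc
    cases blocks_eq hB hB' hx hc
    exact ih hb

lemma block_eq_classOf (hB : B ∈ P.blocks) {x : ℤ} (hx : x ∈ B) :
    B = classOf n P.arcs x := by
  ext y
  rw [mem_classOf]
  constructor
  · intro hy
    refine ⟨block_gd hB hy, ?_⟩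
    rcases le_total (nestOrd n x) (nestOrd n y) with hle | hle
    · exact Or.inl (block_reach hB _ x hx y hy hle le_rfl)
    · exact Or.inr (block_reach hB _ y hy x hx hle le_rfl)
  · rintro ⟨hgy, hconn⟩
    rcases hconn with hr | hr
    · exact reach_mem_fwd hr hB hx
    · exact reach_mem_rev hr hB hx

lemma eq_of_arcs_eq {P Q : SetPartitionC n} (h : P.arcs = Q.arcs) : P = Q := by
  have key : ∀ (R S : SetPartitionC n), R.arcs = S.arcs → ∀ B ∈ R.blocks, B ∈ S.blocks := by
    intro R S hRS B hB
    obtain ⟨x, hx⟩ := R.nonempty B hB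
    have hgx : Gd n x := block_gd hB hx
    obtain ⟨B', hB', hx'⟩ := (S.cover x).2 (gd_iff_abs.1 hgx)
    have e1 := block_eq_classOf hB hx
    have e2 := block_eq_classOf hB' hx'
    rw [e1, hRS, ← e2]
    exact hB'
  have hb : P.blocks = Q.blocks := by
    ext B
    exact ⟨fun hB => key P Q h B hB, fun hB => key Q P h.symm B hB⟩
  cases P
  cases Q
  simpa using hb

lemma arcs_src {O C : Finset ℤ} (hO : O ⊆ Finset.Icc 1 (n : ℤ)) (hC : C ⊆ Finset.Icc 1 (n : ℤ))
    (hop : P.openers = O) (hcl : P.closers = C) :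
    ∀ i : ℤ, (∃ j, (i, j) ∈ P.arcs) ↔ i ∈ O ∪ negSet C := by
  intro i
  constructor
  · rintro ⟨j, hj⟩
    have harc := arcs_mem.1 hj
    obtain ⟨hlt, B, hB, hiB, hjB, _⟩ := id harc
    have hgi : Gd n i := block_gd hB hiB
    rcases lt_or_gt_of_ne hgi.1 with hneg | hpos
    · have harc' := isArc_neg harc
      obtain ⟨hlt', B', hB', hjB', hiB', _⟩ := harc'
      apply Finset.mem_union_right
      rw [mem_negSet, ← hcl]
      simp only [SetPartitionC.closers, Finset.mem_filter, Finset.mem_Icc]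
      exact ⟨⟨by omega, by have := hgi.2.1; omega⟩, B', hB', hiB', -j, hjB', hlt'⟩
    · apply Finset.mem_union_left
      rw [← hop]
      simp only [SetPartitionC.openers, Finset.mem_filter, Finset.mem_Icc]
      exact ⟨⟨by omega, hgi.2.2⟩, B, hB, hiB, j, hjB, hlt⟩
  · intro hmem
    rcases Finset.mem_union.1 hmem with hmem | hmem
    · rw [← hop] at hmem
      simp only [SetPartitionC.openers, Finset.mem_filter, Finset.mem_Icc] at hmem
      obtain ⟨_, B, hB, hiB, j, hjB, hlt⟩ := hmem
      obtain ⟨s, _, hs, _⟩ := succ_arc hB hiB hjB hlt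
      exact ⟨s, arcs_mem.2 hs⟩
    · rw [mem_negSet, ← hcl] at hmem
      simp only [SetPartitionC.closers, Finset.mem_filter, Finset.mem_Icc] at hmem
      obtain ⟨_, B, hB, hiB, j, hjB, hlt⟩ := hmem
      obtain ⟨s, _, hs⟩ := pred_arc hB hiB hjB hlt
      exact ⟨-s, arcs_mem.2 (by simpa using isArc_neg hs)⟩

lemma arcs_tgt {O C : Finset ℤ} (hO : O ⊆ Finset.Icc 1 (n : ℤ)) (hC : C ⊆ Finset.Icc 1 (n : ℤ))
    (hop : P.openers = O) (hcl : P.closers = C) :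
    ∀ i : ℤ, (∃ j, (j, i) ∈ P.arcs) ↔ i ∈ C ∪ negSet O := by
  intro i
  constructor
  · rintro ⟨j, hj⟩
    have harc := arcs_mem.1 hj
    obtain ⟨hlt, B, hB, hjB, hiB, _⟩ := id harc
    have hgi : Gd n i := block_gd hB hiB
    rcases lt_or_gt_of_ne hgi.1 with hneg | hpos
    · have harc' := isArc_neg harc
      obtain ⟨hlt', B', hB', hiB', hjB', _⟩ := harc'
      apply Finset.mem_union_right
      rw [mem_negSet, ← hop]
      simp only [SetPartitionC.openers, Finset.mem_filter, Finset.mem_Icc]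
      exact ⟨⟨by omega, by have := hgi.2.1; omega⟩, B', hB', hiB', -j, hjB', hlt'⟩
    · apply Finset.mem_union_left
      rw [← hcl]
      simp only [SetPartitionC.closers, Finset.mem_filter, Finset.mem_Icc]
      exact ⟨⟨by omega, hgi.2.2⟩, B, hB, hiB, j, hjB, hlt⟩
  · intro hmem
    rcases Finset.mem_union.1 hmem with hmem | hmem
    · rw [← hcl] at hmem
      simp only [SetPartitionC.closers, Finset.mem_filter, Finset.mem_Icc] at hmem
      obtain ⟨_, B, hB, hiB, j, hjB, hlt⟩ := hmem
      obtain ⟨s, _, hs⟩ := pred_arc hB hiB hjB hlt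
      exact ⟨s, arcs_mem.2 hs⟩
    · rw [mem_negSet, ← hop] at hmem
      simp only [SetPartitionC.openers, Finset.mem_filter, Finset.mem_Icc] at hmem
      obtain ⟨_, B, hB, hiB, j, hjB, hlt⟩ := hmem
      obtain ⟨s, _, hs, _⟩ := succ_arc hB hiB hjB hlt
      exact ⟨-s, arcs_mem.2 (by simpa using isArc_neg hs)⟩

/-! ### The non-nesting matching -/

lemma nestRel_neg {a b c d : ℤ} (ha : Gd n a) (hb : Gd n b) (hc : Gd n c) (hd : Gd n d) :
    NestRel n (-b, -a) (-d, -c) ↔ NestRel n (a, b) (c, d) := by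
  unfold NestRel
  dsimp only
  rw [nu_flip hb, nu_flip ha, nu_flip hd, nu_flip hc]
  omega

structure IsNN (n : ℕ) (S T : Finset ℤ) (M : Finset (ℤ × ℤ)) : Prop where
  inc : ∀ p ∈ M, nestOrd n p.1 < nestOrd n p.2
  fun1 : ∀ p ∈ M, ∀ q ∈ M, p.1 = q.1 → p = q
  fun2 : ∀ p ∈ M, ∀ q ∈ M, p.2 = q.2 → p = q
  src : ∀ i : ℤ, (∃ j, (i, j) ∈ M) ↔ i ∈ S
  tgt : ∀ j : ℤ, (∃ i, (i, j) ∈ M) ↔ j ∈ T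
  nonn : ∀ p ∈ M, ∀ q ∈ M, ¬ NestRel n p q

lemma nn_forced {S T : Finset ℤ} {M : Finset (ℤ × ℤ)}
    (hgS : ∀ s ∈ S, Gd n s) (hgT : ∀ t ∈ T, Gd n t) (h : IsNN n S T M) {o c : ℤ}
    (ho : o ∈ S) (homin : ∀ s ∈ S, nestOrd n o ≤ nestOrd n s)
    (hc : c ∈ T) (hcmin : ∀ t ∈ T, nestOrd n c ≤ nestOrd n t) : (o, c) ∈ M := by
  obtain ⟨x, hx⟩ := (h.tgt c).2 hc
  by_cases hxo : x = o
  · exact hxo ▸ hx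
  · exfalso
    obtain ⟨y, hy⟩ := (h.src o).2 ho
    have hxS : x ∈ S := (h.src x).1 ⟨c, hx⟩
    have hyT : y ∈ T := (h.tgt y).1 ⟨o, hy⟩
    have hyc : y ≠ c := by
      intro he
      subst he
      have := h.fun2 (o, y) hy (x, y) hx rfl
      exact hxo (congrArg Prod.fst this).symm
    have h1 : nestOrd n o < nestOrd n x := by
      refine lt_of_le_of_ne (homin x hxS) (fun e => hxo ?_)
      exact (nu_inj (hgS o ho) (hgS x hxS) e).symm
    have h2 : nestOrd n c < nestOrd n y := by
      refine lt_of_le_of_ne (hcmin y hyT) (fun e => hyc ?_)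
      exact (nu_inj (hgT c hc) (hgT y hyT) e).symm
    exact h.nonn (o, y) hy (x, c) hx ⟨h1, h2⟩

theorem nn_core : ∀ m : ℕ, ∀ S T : Finset ℤ, T.card = m → S.card = T.card →
    (∀ s ∈ S, Gd n s) → (∀ t ∈ T, Gd n t) →
    (∀ p : ℤ, (T.filter (fun t => nestOrd n t ≤ p)).card ≤
      (S.filter (fun s => nestOrd n s < p)).card) →
    ∃! M : Finset (ℤ × ℤ), IsNN n S T M := by
  intro m
  induction m with
  | zero =>
    intro S T hT hST hgS hgT hdom
    have hTe : T = ∅ := Finset.card_eq_zero.1 hT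
    have hSe : S = ∅ := Finset.card_eq_zero.1 (by rw [hST, hT])
    subst hTe; subst hSe
    refine ⟨∅, ⟨by simp, by simp, by simp, by simp, by simp, by simp⟩, ?_⟩
    intro N hN
    apply Finset.eq_empty_of_forall_notMem
    intro p hp
    have := (hN.src p.1).1 ⟨p.2, by rwa [Prod.mk.eta]⟩
    simp at this
  | succ m ih =>
    intro S T hT hST hgS hgT hdom
    have hTne : T.Nonempty := Finset.card_pos.1 (by omega)
    obtain ⟨c, hc, hcmin⟩ := Finset.exists_min_image T (nestOrd n) hTne
    have hSne : S.Nonempty := Finset.card_pos.1 (by omega)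
    obtain ⟨o, ho, homin⟩ := Finset.exists_min_image S (nestOrd n) hSne
    have hoc : nestOrd n o < nestOrd n c := by
      have h1 : 0 < (T.filter (fun t => nestOrd n t ≤ nestOrd n c)).card :=
        Finset.card_pos.2 ⟨c, Finset.mem_filter.2 ⟨hc, le_rfl⟩⟩
      have h2 := hdom (nestOrd n c)
      have h3 : 0 < (S.filter (fun s => nestOrd n s < nestOrd n c)).card := lt_of_lt_of_le h1 h2
      obtain ⟨s, hs⟩ := Finset.card_pos.1 h3
      rw [Finset.mem_filter] at hs
      exact lt_of_le_of_lt (homin s hs.1) hs.2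
    have hdom' : ∀ p : ℤ, ((T.erase c).filter (fun t => nestOrd n t ≤ p)).card ≤
        ((S.erase o).filter (fun s => nestOrd n s < p)).card := by
      intro p
      rw [Finset.filter_erase, Finset.filter_erase]
      by_cases hp : nestOrd n c ≤ p
      · have m1 : c ∈ T.filter (fun t => nestOrd n t ≤ p) := Finset.mem_filter.2 ⟨hc, hp⟩
        have m2 : o ∈ S.filter (fun s => nestOrd n s < p) := Finset.mem_filter.2 ⟨ho, by omega⟩
        rw [Finset.card_erase_of_mem m1, Finset.card_erase_of_mem m2]
        have := hdom p
        omega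
      · have he : (T.filter (fun t => nestOrd n t ≤ p)) = ∅ :=
          Finset.filter_eq_empty_iff.2 (fun {t} ht hle => hp (le_trans (hcmin t ht) hle))
        rw [he]
        simp
    obtain ⟨M', hM', hM'u⟩ := ih (S.erase o) (T.erase c)
      (by rw [Finset.card_erase_of_mem hc, hT]; rfl)
      (by rw [Finset.card_erase_of_mem hc, Finset.card_erase_of_mem ho, hST])
      (fun s hs => hgS s (Finset.mem_of_mem_erase hs))
      (fun t ht => hgT t (Finset.mem_of_mem_erase ht)) hdom'
    have hoM' : ∀ j, (o, j) ∉ M' := by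
      intro j hj
      have := (hM'.src o).1 ⟨j, hj⟩
      exact Finset.notMem_erase o S this
    have hcM' : ∀ j, (j, c) ∉ M' := by
      intro j hj
      have := (hM'.tgt c).1 ⟨j, hj⟩
      exact Finset.notMem_erase c T this
    have hnew : IsNN n S T (insert (o, c) M') := by
      constructor
      · rintro p hp
        rcases Finset.mem_insert.1 hp with rfl | hp'
        · exact hoc
        · exact hM'.inc p hp'
      · rintro ⟨a, b⟩ hp ⟨a', b'⟩ hq he
        dsimp only at he
        subst he
        rcases Finset.mem_insert.1 hp with he1 | hp' <;> rcases Finset.mem_insert.1 hq with he2 | hq'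
        · rw [he1, he2]
        · rw [Prod.mk.injEq] at he1
          obtain ⟨rfl, rfl⟩ := he1
          exact absurd hq' (hoM' b')
        · rw [Prod.mk.injEq] at he2
          obtain ⟨rfl, rfl⟩ := he2
          exact absurd hp' (hoM' b)
        · exact hM'.fun1 _ hp' _ hq' rfl
      · rintro ⟨a, b⟩ hp ⟨a', b'⟩ hq he
        dsimp only at he
        subst he
        rcases Finset.mem_insert.1 hp with he1 | hp' <;> rcases Finset.mem_insert.1 hq with he2 | hq'
        · rw [he1, he2]
        · rw [Prod.mk.injEq] at he1
          obtain ⟨rfl, rfl⟩ := he1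
          exact absurd hq' (hcM' a')
        · rw [Prod.mk.injEq] at he2
          obtain ⟨rfl, rfl⟩ := he2
          exact absurd hp' (hcM' a)
        · exact hM'.fun2 _ hp' _ hq' rfl
      · intro i
        constructor
        · rintro ⟨j, hj⟩
          rcases Finset.mem_insert.1 hj with he1 | hj'
          · rw [Prod.mk.injEq] at he1
            obtain ⟨rfl, rfl⟩ := he1
            exact ho
          · exact Finset.mem_of_mem_erase ((hM'.src i).1 ⟨j, hj'⟩)
        · intro hi
          by_cases hio : i = o
          · exact ⟨c, by rw [hio]; exact Finset.mem_insert_self _ _⟩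
          · obtain ⟨j, hj⟩ := (hM'.src i).2 (Finset.mem_erase.2 ⟨hio, hi⟩)
            exact ⟨j, Finset.mem_insert_of_mem hj⟩
      · intro j
        constructor
        · rintro ⟨i, hi⟩
          rcases Finset.mem_insert.1 hi with he1 | hi'
          · rw [Prod.mk.injEq] at he1
            obtain ⟨rfl, rfl⟩ := he1
            exact hc
          · exact Finset.mem_of_mem_erase ((hM'.tgt j).1 ⟨i, hi'⟩)
        · intro hj
          by_cases hjc : j = c
          · exact ⟨o, by rw [hjc]; exact Finset.mem_insert_self _ _⟩
          · obtain ⟨i, hi⟩ := (hM'.tgt j).2 (Finset.mem_erase.2 ⟨hjc, hj⟩)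
            exact ⟨i, Finset.mem_insert_of_mem hi⟩
      · rintro p hp q hq hnest
        rcases Finset.mem_insert.1 hp with rfl | hp' <;> rcases Finset.mem_insert.1 hq with rfl | hq'
        · obtain ⟨h1, h2⟩ := hnest
          dsimp only at h1 h2
          omega
        · obtain ⟨h1, h2⟩ := hnest
          have : q.2 ∈ T.erase c := (hM'.tgt q.2).1 ⟨q.1, by rwa [Prod.mk.eta]⟩
          have := hcmin q.2 (Finset.mem_of_mem_erase this)
          dsimp only at h2
          omega
        · obtain ⟨h1, h2⟩ := hnest
          have : p.1 ∈ S.erase o := (hM'.src p.1).1 ⟨p.2, by rwa [Prod.mk.eta]⟩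
          have := homin p.1 (Finset.mem_of_mem_erase this)
          dsimp only at h1
          omega
        · exact hM'.nonn p hp' q hq' hnest
    refine ⟨insert (o, c) M', hnew, ?_⟩
    intro N hN
    have hocN : (o, c) ∈ N := nn_forced hgS hgT hN ho homin hc hcmin
    have hN' : IsNN n (S.erase o) (T.erase c) (N.erase (o, c)) := by
      constructor
      · exact fun p hp => hN.inc p (Finset.mem_of_mem_erase hp)
      · exact fun p hp q hq he =>
          hN.fun1 p (Finset.mem_of_mem_erase hp) q (Finset.mem_of_mem_erase hq) he
      · exact fun p hp q hq he =>
          hN.fun2 p (Finset.mem_of_mem_erase hp) q (Finset.mem_of_mem_erase hq) he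
      · intro i
        constructor
        · rintro ⟨j, hj⟩
          have hij := Finset.mem_of_mem_erase hj
          have hiS : i ∈ S := (hN.src i).1 ⟨j, hij⟩
          refine Finset.mem_erase.2 ⟨?_, hiS⟩
          intro hio
          subst hio
          have := hN.fun1 (i, j) hij (i, c) hocN rfl
          exact (Finset.mem_erase.1 hj).1 this
        · intro hi
          rw [Finset.mem_erase] at hi
          obtain ⟨j, hj⟩ := (hN.src i).2 hi.2
          refine ⟨j, Finset.mem_erase.2 ⟨?_, hj⟩⟩
          intro he
          rw [Prod.mk.injEq] at he
          exact hi.1 he.1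
      · intro j
        constructor
        · rintro ⟨i, hi⟩
          have hij := Finset.mem_of_mem_erase hi
          have hjT : j ∈ T := (hN.tgt j).1 ⟨i, hij⟩
          refine Finset.mem_erase.2 ⟨?_, hjT⟩
          intro hjc
          subst hjc
          have := hN.fun2 (i, j) hij (o, j) hocN rfl
          exact (Finset.mem_erase.1 hi).1 this
        · intro hj
          rw [Finset.mem_erase] at hj
          obtain ⟨i, hi⟩ := (hN.tgt j).2 hj.2
          refine ⟨i, Finset.mem_erase.2 ⟨?_, hi⟩⟩
          intro he
          rw [Prod.mk.injEq] at he
          exact hj.1 he.2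
      · exact fun p hp q hq =>
          hN.nonn p (Finset.mem_of_mem_erase hp) q (Finset.mem_of_mem_erase hq)
    rw [← Finset.insert_erase hocN, hM'u _ hN']

/-! ### The non-crossing matching: base layer (no positive closers) -/

lemma negSet_empty : negSet (∅ : Finset ℤ) = ∅ := by simp [negSet]

lemma negSet_erase {T : Finset ℤ} {z : ℤ} :
    negSet (T.erase z) = (negSet T).erase (-z) := by
  ext x
  rw [mem_negSet, Finset.mem_erase, Finset.mem_erase, mem_negSet]
  constructor
  · rintro ⟨h1, h2⟩; exact ⟨by omega, h2⟩
  · rintro ⟨h1, h2⟩; exact ⟨by omega, h2⟩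

lemma gd_of_Icc {x : ℤ} (hn : 0 < n) (h : x ∈ Finset.Icc 1 (n : ℤ)) : Gd n x := by
  rw [Finset.mem_Icc] at h
  exact ⟨by omega, by omega, h.2⟩

/-- Symmetric non-crossing matchings all of whose arcs go from a positive
to a negative element. -/
structure XB (n : ℕ) (S T : Finset ℤ) (M : Finset (ℤ × ℤ)) : Prop where
  fun1 : ∀ p ∈ M, ∀ q ∈ M, p.1 = q.1 → p = q
  fun2 : ∀ p ∈ M, ∀ q ∈ M, p.2 = q.2 → p = q
  src : ∀ i : ℤ, (∃ j, (i, j) ∈ M) ↔ i ∈ S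
  tgt : ∀ j : ℤ, (∃ i, (i, j) ∈ M) ↔ j ∈ negSet T
  nonx : ∀ p ∈ M, ∀ q ∈ M, ¬ CrossRel n p q

lemma xb_forced {S T : Finset ℤ} {M : Finset (ℤ × ℤ)}
    (hS : S ⊆ Finset.Icc 1 (n : ℤ)) (hT : T ⊆ Finset.Icc 1 (n : ℤ))
    (h : XB n S T M) {a z : ℤ}
    (ha : a ∈ S) (hamax : ∀ s ∈ S, s ≤ a) (hz : z ∈ T) (hzmin : ∀ t ∈ T, z ≤ t) :
    (a, -z) ∈ M := by
  obtain ⟨y, hy⟩ := (h.src a).2 ha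
  obtain ⟨b, hb⟩ := (h.tgt (-z)).2 (mem_negSet.2 (by simpa using hz))
  have hbS : b ∈ S := (h.src b).1 ⟨-z, hb⟩
  have hyT : -y ∈ T := by
    have := (h.tgt y).1 ⟨a, hy⟩
    rw [mem_negSet] at this
    exact this
  by_cases hba : b = a
  · subst hba
    have := h.fun1 (b, y) hy (b, -z) hb rfl
    rw [this] at hy
    exact hy
  · exfalso
    have hyz : y ≠ -z := by
      intro he
      have := h.fun2 (a, y) hy (b, -z) hb (show y = -z from he)
      exact hba (congrArg Prod.fst this).symm
    have hb_lt : b < a := lt_of_le_of_ne (hamax b hbS) hba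
    have hzy : z < -y := lt_of_le_of_ne (hzmin _ hyT) (by omega)
    have hz1 := Finset.mem_Icc.1 (hT hz)
    have hy1 := Finset.mem_Icc.1 (hT hyT)
    have ha1 := Finset.mem_Icc.1 (hS ha)
    have hb1 := Finset.mem_Icc.1 (hS hbS)
    apply h.nonx (b, -z) hb (a, y) hy
    rw [CrossRel, cpr_pn (by omega : (0:ℤ) < b) (by omega) (by omega : -z < 0),
      cpr_pn (by omega : (0:ℤ) < a) (by omega) (by omega : y < 0)]
    dsimp only
    omega

theorem xb_core (hn : 0 < n) : ∀ k : ℕ, ∀ S T : Finset ℤ, S.card = k → T.card = k →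
    S ⊆ Finset.Icc 1 (n : ℤ) → T ⊆ Finset.Icc 1 (n : ℤ) →
    ∃! M : Finset (ℤ × ℤ), XB n S T M := by
  intro k
  induction k with
  | zero =>
    intro S T hS hT hSn hTn
    have hSe : S = ∅ := Finset.card_eq_zero.1 hS
    have hTe : T = ∅ := Finset.card_eq_zero.1 hT
    subst hSe; subst hTe
    refine ⟨∅, ⟨by simp, by simp, by simp, by simp [negSet_empty], by simp⟩, ?_⟩
    intro N hN
    apply Finset.eq_empty_of_forall_notMem
    intro p hp
    have := (hN.src p.1).1 ⟨p.2, by rwa [Prod.mk.eta]⟩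
    simp at this
  | succ k ih =>
    intro S T hS hT hSn hTn
    have hSne : S.Nonempty := Finset.card_pos.1 (by omega)
    have hTne : T.Nonempty := Finset.card_pos.1 (by omega)
    obtain ⟨a, ha, hamax⟩ := Finset.exists_max_image S id hSne
    obtain ⟨z, hz, hzmin⟩ := Finset.exists_min_image T id hTne
    simp only [id] at hamax hzmin
    obtain ⟨M', hM', hM'u⟩ := ih (S.erase a) (T.erase z)
      (by rw [Finset.card_erase_of_mem ha, hS]; rfl)
      (by rw [Finset.card_erase_of_mem hz, hT]; rfl)
      (fun s hs => hSn (Finset.mem_of_mem_erase hs))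
      (fun t ht => hTn (Finset.mem_of_mem_erase ht))
    have haM' : ∀ j, (a, j) ∉ M' := by
      intro j hj
      exact Finset.notMem_erase a S ((hM'.src a).1 ⟨j, hj⟩)
    have hzM' : ∀ j, (j, -z) ∉ M' := by
      intro j hj
      have := (hM'.tgt (-z)).1 ⟨j, hj⟩
      rw [negSet_erase, Finset.mem_erase] at this
      exact this.1 rfl
    have ha1 := Finset.mem_Icc.1 (hSn ha)
    have hz1 := Finset.mem_Icc.1 (hTn hz)
    have hM'shape : ∀ p ∈ M', 0 < p.1 ∧ p.1 < a ∧ p.2 < 0 ∧ z < -p.2 ∧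
        p.1 ≤ (n : ℤ) ∧ -p.2 ≤ (n : ℤ) := by
      rintro ⟨x, y⟩ hp
      have hxS : x ∈ S.erase a := (hM'.src x).1 ⟨y, hp⟩
      have hyT : y ∈ negSet (T.erase z) := (hM'.tgt y).1 ⟨x, hp⟩
      rw [Finset.mem_erase] at hxS
      rw [mem_negSet, Finset.mem_erase] at hyT
      have h1 := Finset.mem_Icc.1 (hSn hxS.2)
      have h2 := Finset.mem_Icc.1 (hTn hyT.2)
      have := hamax x hxS.2
      have := hzmin (-y) hyT.2
      refine ⟨by omega, lt_of_le_of_ne (hamax x hxS.2) hxS.1, by omega, ?_, by omega, by omega⟩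
      have : -y ≠ z := hyT.1
      omega
    have hnocross : ∀ q ∈ M', ¬ Crosses n (a, -z) q := by
      rintro ⟨x, y⟩ hq hcr
      obtain ⟨k1, k2, k3, k4, k5, k6⟩ := hM'shape (x, y) hq
      rw [Crosses, CrossRel, CrossRel, cpr_pn (by omega : (0:ℤ) < a) (by omega) (by omega : -z < 0),
        cpr_pn k1 k5 (by omega : y < 0)] at hcr
      dsimp only at hcr
      omega
    have hnew : XB n S T (insert (a, -z) M') := by
      constructor
      · rintro ⟨x, y⟩ hp ⟨x', y'⟩ hq he
        dsimp only at he
        subst he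
        rcases Finset.mem_insert.1 hp with he1 | hp' <;> rcases Finset.mem_insert.1 hq with he2 | hq'
        · rw [he1, he2]
        · rw [Prod.mk.injEq] at he1
          obtain ⟨rfl, rfl⟩ := he1
          exact absurd hq' (haM' y')
        · rw [Prod.mk.injEq] at he2
          obtain ⟨rfl, rfl⟩ := he2
          exact absurd hp' (haM' y)
        · exact hM'.fun1 _ hp' _ hq' rfl
      · rintro ⟨x, y⟩ hp ⟨x', y'⟩ hq he
        dsimp only at he
        subst he
        rcases Finset.mem_insert.1 hp with he1 | hp' <;> rcases Finset.mem_insert.1 hq with he2 | hq'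
        · rw [he1, he2]
        · rw [Prod.mk.injEq] at he1
          obtain ⟨rfl, rfl⟩ := he1
          exact absurd hq' (hzM' x')
        · rw [Prod.mk.injEq] at he2
          obtain ⟨rfl, rfl⟩ := he2
          exact absurd hp' (hzM' x)
        · exact hM'.fun2 _ hp' _ hq' rfl
      · intro i
        constructor
        · rintro ⟨j, hj⟩
          rcases Finset.mem_insert.1 hj with he1 | hj'
          · rw [Prod.mk.injEq] at he1
            obtain ⟨rfl, rfl⟩ := he1
            exact ha
          · exact Finset.mem_of_mem_erase ((hM'.src i).1 ⟨j, hj'⟩)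
        · intro hi
          by_cases hia : i = a
          · exact ⟨-z, by rw [hia]; exact Finset.mem_insert_self _ _⟩
          · obtain ⟨j, hj⟩ := (hM'.src i).2 (Finset.mem_erase.2 ⟨hia, hi⟩)
            exact ⟨j, Finset.mem_insert_of_mem hj⟩
      · intro j
        constructor
        · rintro ⟨i, hi⟩
          rcases Finset.mem_insert.1 hi with he1 | hi'
          · rw [Prod.mk.injEq] at he1
            obtain ⟨rfl, rfl⟩ := he1
            exact mem_negSet.2 (by simpa using hz)
          · have := (hM'.tgt j).1 ⟨i, hi'⟩
            rw [negSet_erase] at this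
            exact Finset.mem_of_mem_erase this
        · intro hj
          by_cases hjz : j = -z
          · exact ⟨a, by rw [hjz]; exact Finset.mem_insert_self _ _⟩
          · have : j ∈ negSet (T.erase z) := by
              rw [negSet_erase]
              exact Finset.mem_erase.2 ⟨hjz, hj⟩
            obtain ⟨i, hi⟩ := (hM'.tgt j).2 this
            exact ⟨i, Finset.mem_insert_of_mem hi⟩
      · rintro p hp q hq hcr
        rcases Finset.mem_insert.1 hp with rfl | hp' <;> rcases Finset.mem_insert.1 hq with rfl | hq'
        · exact not_crossRel_self _ hcr
        · exact hnocross q hq' (Or.inl hcr)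
        · exact hnocross p hp' (Or.inr hcr)
        · exact hM'.nonx p hp' q hq' hcr
    refine ⟨insert (a, -z) M', hnew, ?_⟩
    intro N hN
    have hazN : (a, -z) ∈ N := xb_forced hSn hTn hN ha hamax hz hzmin
    have hN' : XB n (S.erase a) (T.erase z) (N.erase (a, -z)) := by
      constructor
      · exact fun p hp q hq he =>
          hN.fun1 p (Finset.mem_of_mem_erase hp) q (Finset.mem_of_mem_erase hq) he
      · exact fun p hp q hq he =>
          hN.fun2 p (Finset.mem_of_mem_erase hp) q (Finset.mem_of_mem_erase hq) he
      · intro i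
        constructor
        · rintro ⟨j, hj⟩
          have hij := Finset.mem_of_mem_erase hj
          refine Finset.mem_erase.2 ⟨?_, (hN.src i).1 ⟨j, hij⟩⟩
          intro hia
          subst hia
          have := hN.fun1 (i, j) hij (i, -z) hazN rfl
          exact (Finset.mem_erase.1 hj).1 this
        · intro hi
          rw [Finset.mem_erase] at hi
          obtain ⟨j, hj⟩ := (hN.src i).2 hi.2
          refine ⟨j, Finset.mem_erase.2 ⟨?_, hj⟩⟩
          intro he
          rw [Prod.mk.injEq] at he
          exact hi.1 he.1
      · intro j
        constructor
        · rintro ⟨i, hi⟩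
          have hij := Finset.mem_of_mem_erase hi
          rw [negSet_erase]
          refine Finset.mem_erase.2 ⟨?_, (hN.tgt j).1 ⟨i, hij⟩⟩
          intro hjz
          subst hjz
          have := hN.fun2 (i, -z) hij (a, -z) hazN rfl
          exact (Finset.mem_erase.1 hi).1 this
        · intro hj
          rw [negSet_erase, Finset.mem_erase] at hj
          obtain ⟨i, hi⟩ := (hN.tgt j).2 hj.2
          refine ⟨i, Finset.mem_erase.2 ⟨?_, hi⟩⟩
          intro he
          rw [Prod.mk.injEq] at he
          exact hj.1 he.2
      · exact fun p hp q hq =>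
          hN.nonx p (Finset.mem_of_mem_erase hp) q (Finset.mem_of_mem_erase hq)
    rw [← Finset.insert_erase hazN, hM'u _ hN']

/-! ### The non-crossing matching -/

structure IsXM (n : ℕ) (O C : Finset ℤ) (M : Finset (ℤ × ℤ)) : Prop where
  gd : ∀ p ∈ M, Gd n p.1 ∧ Gd n p.2
  inc : ∀ p ∈ M, nestOrd n p.1 < nestOrd n p.2
  fun1 : ∀ p ∈ M, ∀ q ∈ M, p.1 = q.1 → p = q
  fun2 : ∀ p ∈ M, ∀ q ∈ M, p.2 = q.2 → p = q
  src : ∀ i : ℤ, (∃ j, (i, j) ∈ M) ↔ i ∈ O ∪ negSet C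
  tgt : ∀ j : ℤ, (∃ i, (i, j) ∈ M) ↔ j ∈ C ∪ negSet O
  msymm : ∀ p ∈ M, (-p.2, -p.1) ∈ M
  nonx : ∀ p ∈ M, ∀ q ∈ M, ¬ CrossRel n p q

lemma xb_shape {S T : Finset ℤ} {M : Finset (ℤ × ℤ)}
    (hS : S ⊆ Finset.Icc 1 (n : ℤ)) (hT : T ⊆ Finset.Icc 1 (n : ℤ))
    (h : XB n S T M) : ∀ p ∈ M, 1 ≤ p.1 ∧ p.1 ≤ (n : ℤ) ∧ p.2 < 0 ∧ 1 ≤ -p.2 ∧ -p.2 ≤ (n : ℤ) ∧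
      p.1 ∈ S ∧ -p.2 ∈ T := by
  rintro ⟨x, y⟩ hp
  have hxS : x ∈ S := (h.src x).1 ⟨y, hp⟩
  have hyT : -y ∈ T := mem_negSet.1 ((h.tgt y).1 ⟨x, hp⟩)
  have h1 := Finset.mem_Icc.1 (hS hxS)
  have h2 := Finset.mem_Icc.1 (hT hyT)
  exact ⟨h1.1, h1.2, by omega, by omega, by omega, hxS, hyT⟩

lemma xb_neg {S T : Finset ℤ} {M : Finset (ℤ × ℤ)}
    (hS : S ⊆ Finset.Icc 1 (n : ℤ)) (hT : T ⊆ Finset.Icc 1 (n : ℤ))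
    (h : XB n S T M) : XB n T S (M.image (fun p => (-p.2, -p.1))) := by
  have shape := xb_shape hS hT h
  constructor
  · rintro q hq q' hq' he
    obtain ⟨⟨p1, p2⟩, hp, rfl⟩ := Finset.mem_image.1 hq
    obtain ⟨⟨p1', p2'⟩, hp', rfl⟩ := Finset.mem_image.1 hq'
    dsimp only at he ⊢
    have := h.fun2 (p1, p2) hp (p1', p2') hp' (show p2 = p2' by omega)
    rw [Prod.mk.injEq] at this
    rw [this.1, this.2]
  · rintro q hq q' hq' he
    obtain ⟨⟨p1, p2⟩, hp, rfl⟩ := Finset.mem_image.1 hq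
    obtain ⟨⟨p1', p2'⟩, hp', rfl⟩ := Finset.mem_image.1 hq'
    dsimp only at he ⊢
    have := h.fun1 (p1, p2) hp (p1', p2') hp' (show p1 = p1' by omega)
    rw [Prod.mk.injEq] at this
    rw [this.1, this.2]
  · intro i
    constructor
    · rintro ⟨j, hj⟩
      obtain ⟨⟨p1, p2⟩, hp, he⟩ := Finset.mem_image.1 hj
      rw [Prod.mk.injEq] at he
      have := (shape (p1, p2) hp).2.2.2.2.2.2
      exact he.1 ▸ this
    · intro hi
      obtain ⟨x, hx⟩ := (h.tgt (-i)).2 (mem_negSet.2 (by simpa using hi))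
      exact ⟨-x, Finset.mem_image.2 ⟨(x, -i), hx, by simp⟩⟩
  · intro j
    constructor
    · rintro ⟨i, hi⟩
      obtain ⟨⟨p1, p2⟩, hp, he⟩ := Finset.mem_image.1 hi
      rw [Prod.mk.injEq] at he
      have := (shape (p1, p2) hp).2.2.2.2.2.1
      rw [mem_negSet, ← he.2]
      simpa using this
    · intro hj
      obtain ⟨y, hy⟩ := (h.src (-j)).2 (mem_negSet.1 hj)
      exact ⟨-y, Finset.mem_image.2 ⟨(-j, y), hy, by simp⟩⟩
  · rintro q hq q' hq' hcr
    obtain ⟨⟨p1, p2⟩, hp, rfl⟩ := Finset.mem_image.1 hq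
    obtain ⟨⟨p1', p2'⟩, hp', rfl⟩ := Finset.mem_image.1 hq'
    have s1 := shape (p1, p2) hp
    have s2 := shape (p1', p2') hp'
    dsimp only at s1 s2
    have hx : Crosses n (-p2, -p1) (-p2', -p1') := Or.inl hcr
    rw [crosses_neg (n := n) (a := p1) (b := p2) (c := p1') (d := p2')
      ⟨by omega, by omega, by omega⟩ ⟨by omega, by omega, by omega⟩
      ⟨by omega, by omega, by omega⟩ ⟨by omega, by omega, by omega⟩
      (by rw [nu_of_pos (by omega), nu_of_neg (by omega)]; omega)
      (by rw [nu_of_pos (by omega), nu_of_neg (by omega)]; omega)] at hx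
    rcases hx with hx | hx
    · exact h.nonx _ hp _ hp' hx
    · exact h.nonx _ hp' _ hp hx

lemma xm_forced {O C : Finset ℤ} {M : Finset (ℤ × ℤ)}
    (hO : O ⊆ Finset.Icc 1 (n : ℤ)) (hC : C ⊆ Finset.Icc 1 (n : ℤ))
    (h : IsXM n O C M) {o c : ℤ}
    (hc : c ∈ C) (hcmin : ∀ t ∈ C, c ≤ t) (ho : o ∈ O) (holt : o < c)
    (homax : ∀ s ∈ O, s < c → s ≤ o) : (o, c) ∈ M := by
  obtain ⟨x, hx⟩ := (h.tgt c).2 (Finset.mem_union_left _ hc)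
  have hc1 := Finset.mem_Icc.1 (hC hc)
  have hgx := (h.gd _ hx).1
  have hxpos : 0 < x := by
    by_contra hxn
    have := h.inc _ hx
    dsimp only at this
    rw [nu_of_pos (by omega : (0:ℤ) < c),
      nu_of_neg (show x < 0 by rcases hgx with ⟨h1, h2, h3⟩; omega)] at this
    have := hgx.2.1
    omega
  have hxO : x ∈ O := by
    rcases Finset.mem_union.1 ((h.src x).1 ⟨c, hx⟩) with hm | hm
    · exact hm
    · exfalso
      have := Finset.mem_Icc.1 (hC (mem_negSet.1 hm))
      omega
  have hxc : x < c := by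
    have := h.inc _ hx
    dsimp only at this
    rwa [nu_of_pos hxpos, nu_of_pos (by omega : (0:ℤ) < c)] at this
  have hxo : x ≤ o := homax x hxO hxc
  by_cases hxoe : x = o
  · rwa [hxoe] at hx
  · exfalso
    have hxlt : x < o := lt_of_le_of_ne hxo hxoe
    obtain ⟨y, hy⟩ := (h.src o).2 (Finset.mem_union_left _ ho)
    have hyc : y ≠ c := by
      intro he
      subst he
      have := h.fun2 (o, y) hy (x, y) hx rfl
      exact hxoe (congrArg Prod.fst this).symm
    have ho1 := Finset.mem_Icc.1 (hO ho)
    have hgy := (h.gd _ hy).2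
    have hinc := h.inc _ hy
    dsimp only at hinc
    rw [nu_of_pos (by omega : (0:ℤ) < o)] at hinc
    rcases lt_or_gt_of_ne hgy.1 with hyneg | hypos
    · apply h.nonx (x, c) hx (o, y) hy
      rw [CrossRel, cpr_pp hxpos hxc, cpr_pn (by omega : (0:ℤ) < o) (by omega) hyneg]
      dsimp only
      have := hgy.2.1
      omega
    · have hyC : y ∈ C := by
        rcases Finset.mem_union.1 ((h.tgt y).1 ⟨o, hy⟩) with hm | hm
        · exact hm
        · exfalso
          have := Finset.mem_Icc.1 (hO (mem_negSet.1 hm))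
          omega
      have hcy : c < y := lt_of_le_of_ne (hcmin y hyC) (by omega)
      apply h.nonx (x, c) hx (o, y) hy
      rw [CrossRel, cpr_pp hxpos hxc, cpr_pp (by omega : (0:ℤ) < o) (by omega : o < y)]
      dsimp only
      omega

theorem xm_core (hn : 0 < n) : ∀ m : ℕ, ∀ O C : Finset ℤ, C.card = m →
    O ⊆ Finset.Icc 1 (n : ℤ) → C ⊆ Finset.Icc 1 (n : ℤ) →
    (∀ c : ℤ, 1 ≤ c → c ≤ (n : ℤ) →
      (C.filter (fun t => t ≤ c)).card ≤ (O.filter (fun s => s < c)).card) →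
    ∃! M : Finset (ℤ × ℤ), IsXM n O C M := by
  intro m
  induction m with
  | zero =>
    intro O C hC hOn hCn hdom
    have hCe : C = ∅ := Finset.card_eq_zero.1 hC
    subst hCe
    obtain ⟨M0, hM0, hM0u⟩ := xb_core hn O.card O O rfl rfl hOn hOn
    have hsymm : ∀ p ∈ M0, (-p.2, -p.1) ∈ M0 := by
      have := hM0u _ (xb_neg hOn hOn hM0)
      intro p hp
      rw [← this]
      exact Finset.mem_image.2 ⟨p, hp, rfl⟩
    have shape := xb_shape hOn hOn hM0
    refine ⟨M0, ⟨?_, ?_, hM0.fun1, hM0.fun2, ?_, ?_, hsymm, hM0.nonx⟩, ?_⟩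
    · rintro ⟨x, y⟩ hp
      have := shape _ hp
      dsimp only at this ⊢
      exact ⟨⟨by omega, by omega, by omega⟩, ⟨by omega, by omega, by omega⟩⟩
    · rintro ⟨x, y⟩ hp
      have := shape _ hp
      dsimp only at this ⊢
      rw [nu_of_pos (by omega), nu_of_neg (by omega)]
      omega
    · intro i
      rw [negSet_empty, Finset.union_empty]
      exact hM0.src i
    · intro j
      rw [Finset.empty_union]
      exact hM0.tgt j
    · intro N hN
      apply hM0u
      refine ⟨hN.fun1, hN.fun2, ?_, ?_, hN.nonx⟩
      · intro i
        have := hN.src i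
        rwa [negSet_empty, Finset.union_empty] at this
      · intro j
        have := hN.tgt j
        rwa [Finset.empty_union] at this
  | succ m ih =>
    intro O C hC hOn hCn hdom
    have hCne : C.Nonempty := Finset.card_pos.1 (by omega)
    obtain ⟨c, hc, hcmin⟩ := Finset.exists_min_image C id hCne
    simp only [id] at hcmin
    have hc1 := Finset.mem_Icc.1 (hCn hc)
    have hOfne : (O.filter (fun s => s < c)).Nonempty := by
      have h1 : 0 < (C.filter (fun t => t ≤ c)).card :=
        Finset.card_pos.2 ⟨c, Finset.mem_filter.2 ⟨hc, le_rfl⟩⟩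
      have := hdom c hc1.1 hc1.2
      exact Finset.card_pos.1 (by omega)
    obtain ⟨o, hoF, homax'⟩ := Finset.exists_max_image _ id hOfne
    simp only [id] at homax'
    rw [Finset.mem_filter] at hoF
    obtain ⟨ho, holt⟩ := hoF
    have homax : ∀ s ∈ O, s < c → s ≤ o := fun s hs hlt =>
      homax' s (Finset.mem_filter.2 ⟨hs, hlt⟩)
    have ho1 := Finset.mem_Icc.1 (hOn ho)
    have hdom' : ∀ k : ℤ, 1 ≤ k → k ≤ (n : ℤ) →
        ((C.erase c).filter (fun t => t ≤ k)).card ≤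
        ((O.erase o).filter (fun s => s < k)).card := by
      intro k hk1 hk2
      rw [Finset.filter_erase, Finset.filter_erase]
      by_cases hck : c ≤ k
      · have m1 : c ∈ C.filter (fun t => t ≤ k) := Finset.mem_filter.2 ⟨hc, hck⟩
        have m2 : o ∈ O.filter (fun s => s < k) := Finset.mem_filter.2 ⟨ho, by omega⟩
        rw [Finset.card_erase_of_mem m1, Finset.card_erase_of_mem m2]
        have := hdom k hk1 hk2
        omega
      · have e1 : c ∉ C.filter (fun t => t ≤ k) := by
          rw [Finset.mem_filter]
          push_neg
          intro _
          omega
        rw [Finset.erase_eq_of_notMem e1]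
        by_cases hok : o < k
        · have key1 : (C.filter (fun t => t ≤ k)).card ≤
              (C.filter (fun t => t ≤ c - 1)).card := by
            apply Finset.card_le_card
            intro t ht
            rw [Finset.mem_filter] at ht ⊢
            exact ⟨ht.1, by omega⟩
          have key2 : C.filter (fun t => t ≤ c) = insert c (C.filter (fun t => t ≤ c - 1)) := by
            ext t
            rw [Finset.mem_insert, Finset.mem_filter, Finset.mem_filter]
            constructor
            · rintro ⟨h1, h2⟩
              by_cases htc : t = c
              · exact Or.inl htc
              · exact Or.inr ⟨h1, by omega⟩
            · rintro (rfl | ⟨h1, h2⟩)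
              · exact ⟨hc, le_rfl⟩
              · exact ⟨h1, by omega⟩
          have key2' : (C.filter (fun t => t ≤ c)).card =
              (C.filter (fun t => t ≤ c - 1)).card + 1 := by
            rw [key2, Finset.card_insert_of_notMem]
            rw [Finset.mem_filter]
            push_neg
            intro _
            omega
          have key3 : O.filter (fun s => s < c) = O.filter (fun s => s < k) := by
            ext s
            rw [Finset.mem_filter, Finset.mem_filter]
            constructor
            · rintro ⟨h1, h2⟩
              exact ⟨h1, lt_of_le_of_lt (homax s h1 h2) hok⟩
            · rintro ⟨h1, h2⟩
              exact ⟨h1, by omega⟩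
          have key4 := hdom c hc1.1 hc1.2
          have key5 : o ∈ O.filter (fun s => s < k) := Finset.mem_filter.2 ⟨ho, hok⟩
          rw [Finset.card_erase_of_mem key5]
          rw [key3] at key4
          omega
        · have e2 : o ∉ O.filter (fun s => s < k) := by
            rw [Finset.mem_filter]
            push_neg
            intro _
            omega
          rw [Finset.erase_eq_of_notMem e2]
          exact hdom k hk1 hk2
    obtain ⟨M', hM', hM'u⟩ := ih (O.erase o) (C.erase c)
      (by rw [Finset.card_erase_of_mem hc, hC]; rfl)
      (fun s hs => hOn (Finset.mem_of_mem_erase hs))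
      (fun t ht => hCn (Finset.mem_of_mem_erase ht)) hdom'
    have hsM' : ∀ i j, (i, j) ∈ M' → i ≠ o ∧ i ≠ -c := by
      intro i j hij
      rcases Finset.mem_union.1 ((hM'.src i).1 ⟨j, hij⟩) with hm | hm
      · rw [Finset.mem_erase] at hm
        have := Finset.mem_Icc.1 (hOn hm.2)
        exact ⟨hm.1, by omega⟩
      · rw [mem_negSet, Finset.mem_erase] at hm
        have := Finset.mem_Icc.1 (hCn hm.2)
        constructor
        · omega
        · intro he
          exact hm.1 (by omega)
    have htM' : ∀ i j, (i, j) ∈ M' → j ≠ c ∧ j ≠ -o := by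
      intro i j hij
      rcases Finset.mem_union.1 ((hM'.tgt j).1 ⟨i, hij⟩) with hm | hm
      · rw [Finset.mem_erase] at hm
        have := Finset.mem_Icc.1 (hCn hm.2)
        exact ⟨hm.1, by omega⟩
      · rw [mem_negSet, Finset.mem_erase] at hm
        have := Finset.mem_Icc.1 (hOn hm.2)
        constructor
        · omega
        · intro he
          exact hm.1 (by omega)
    have hnoxoc : ∀ q ∈ M', ¬ Crosses n (o, c) q := by
      rintro ⟨x, y⟩ hq hcr
      have hgd := hM'.gd _ hq
      have hinc := hM'.inc _ hq
      dsimp only at hinc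
      have hsx := (hM'.src x).1 ⟨y, hq⟩
      have hty := (hM'.tgt y).1 ⟨x, hq⟩
      rcases arc_signs hgd.1 hgd.2 hinc with ⟨p1, p2, p3⟩ | ⟨p1, p2⟩ | ⟨p1, p2, p3⟩
      · have hxO : x ∈ O.erase o := by
          rcases Finset.mem_union.1 hsx with hm | hm
          · exact hm
          · exfalso
            rw [mem_negSet, Finset.mem_erase] at hm
            have := Finset.mem_Icc.1 (hCn hm.2)
            omega
        have hyC : y ∈ C.erase c := by
          rcases Finset.mem_union.1 hty with hm | hm
          · exact hm
          · exfalso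
            rw [mem_negSet, Finset.mem_erase] at hm
            have := Finset.mem_Icc.1 (hOn hm.2)
            omega
        rw [Finset.mem_erase] at hxO hyC
        have b1 := Finset.mem_Icc.1 (hOn hxO.2)
        have b2 := Finset.mem_Icc.1 (hCn hyC.2)
        have hx_o : x < c → x < o := fun hlt => lt_of_le_of_ne (homax x hxO.2 hlt) hxO.1
        have hy_c : c < y := lt_of_le_of_ne (hcmin y hyC.2) (Ne.symm hyC.1)
        rcases hcr with hcr | hcr <;>
          rw [CrossRel, cpr_pp (by omega : (0:ℤ) < o) (by omega : o < c), cpr_pp p1 p3] at hcr <;>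
            dsimp only at hcr
        · have := hx_o (by omega)
          omega
        · omega
      · have hxO : x ∈ O.erase o := by
          rcases Finset.mem_union.1 hsx with hm | hm
          · exact hm
          · exfalso
            rw [mem_negSet, Finset.mem_erase] at hm
            have := Finset.mem_Icc.1 (hCn hm.2)
            omega
        have hyO : -y ∈ O.erase o := by
          rcases Finset.mem_union.1 hty with hm | hm
          · exfalso
            rw [Finset.mem_erase] at hm
            have := Finset.mem_Icc.1 (hCn hm.2)
            omega
          · rwa [mem_negSet] at hm
        rw [Finset.mem_erase] at hxO hyO
        have b1 := Finset.mem_Icc.1 (hOn hxO.2)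
        have b2 := Finset.mem_Icc.1 (hOn hyO.2)
        have hx_o : x < c → x < o := fun hlt => lt_of_le_of_ne (homax x hxO.2 hlt) hxO.1
        rcases hcr with hcr | hcr <;>
          rw [CrossRel, cpr_pp (by omega : (0:ℤ) < o) (by omega : o < c),
            cpr_pn p1 (by omega) p2] at hcr <;> dsimp only at hcr
        · have := hx_o (by omega)
          omega
        · omega
      · have hxC : -x ∈ C.erase c := by
          rcases Finset.mem_union.1 hsx with hm | hm
          · exfalso
            have := Finset.mem_Icc.1 (hOn (Finset.mem_of_mem_erase hm))
            omega
          · rwa [mem_negSet] at hm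
        have hyO : -y ∈ O.erase o := by
          rcases Finset.mem_union.1 hty with hm | hm
          · exfalso
            have := Finset.mem_Icc.1 (hCn (Finset.mem_of_mem_erase hm))
            omega
          · rwa [mem_negSet] at hm
        rw [Finset.mem_erase] at hxC hyO
        have b1 := Finset.mem_Icc.1 (hCn hxC.2)
        have b2 := Finset.mem_Icc.1 (hOn hyO.2)
        rcases hcr with hcr | hcr <;>
          rw [CrossRel, cpr_pp (by omega : (0:ℤ) < o) (by omega : o < c),
            cpr_nn p2 p3] at hcr <;> dsimp only at hcr
        · omega
        · omega
    have hnegq : ∀ q ∈ M', ¬ Crosses n (-c, -o) q := by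
      rintro ⟨x, y⟩ hq hcr
      have hq' := hM'.msymm _ hq
      dsimp only at hq'
      have hgd := hM'.gd (x, y) hq
      dsimp only at hgd
      have hinc := hM'.inc (x, y) hq
      dsimp only at hinc
      have hiff := crosses_neg (n := n) (a := o) (b := c) (c := -y) (d := -x)
        ⟨by omega, by omega, by omega⟩ ⟨by omega, by omega, by omega⟩
        (gd_neg hgd.2) (gd_neg hgd.1)
        (by rw [nu_of_pos (by omega : (0:ℤ) < o), nu_of_pos (by omega : (0:ℤ) < c)]; omega)
        (by rw [nu_flip hgd.2, nu_flip hgd.1]; omega)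
      rw [neg_neg, neg_neg] at hiff
      exact hnoxoc (-y, -x) hq' (hiff.1 hcr)
    have hooc : ¬ Crosses n (o, c) (-c, -o) := by
      rintro (hcr | hcr) <;>
        rw [CrossRel, cpr_pp (by omega : (0:ℤ) < o) (by omega : o < c),
          cpr_nn (by omega : -o < 0) (by omega : -c < -o)] at hcr <;> dsimp only at hcr <;> omega
    have hnew : IsXM n O C (insert (o, c) (insert (-c, -o) M')) := by
      constructor
      · rintro p hp
        rcases Finset.mem_insert.1 hp with rfl | hp'
        · exact ⟨⟨by omega, by omega, by omega⟩, ⟨by omega, by omega, by omega⟩⟩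
        rcases Finset.mem_insert.1 hp' with rfl | hp''
        · exact ⟨⟨by omega, by omega, by omega⟩, ⟨by omega, by omega, by omega⟩⟩
        · exact hM'.gd p hp''
      · rintro p hp
        rcases Finset.mem_insert.1 hp with rfl | hp'
        · dsimp only
          rw [nu_of_pos (by omega : (0:ℤ) < o), nu_of_pos (by omega : (0:ℤ) < c)]
          omega
        rcases Finset.mem_insert.1 hp' with rfl | hp''
        · dsimp only
          rw [nu_of_neg (by omega : -c < 0), nu_of_neg (by omega : -o < 0)]
          omega
        · exact hM'.inc p hp''
      · rintro ⟨x, y⟩ hp ⟨x', y'⟩ hq he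
        dsimp only at he
        subst he
        rcases Finset.mem_insert.1 hp with he1 | hp' <;> [skip; rcases Finset.mem_insert.1 hp' with he1' | hp'']
        all_goals rcases Finset.mem_insert.1 hq with he2 | hq' <;>
          [skip; rcases Finset.mem_insert.1 hq' with he2' | hq'']
        · rw [he1, he2]
        · rw [Prod.mk.injEq] at he1 he2'
          omega
        · rw [Prod.mk.injEq] at he1
          obtain ⟨rfl, rfl⟩ := he1
          exact absurd rfl (hsM' _ _ hq'').1
        · rw [Prod.mk.injEq] at he1' he2
          omega
        · rw [he1', he2']
        · rw [Prod.mk.injEq] at he1'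
          obtain ⟨rfl, rfl⟩ := he1'
          exact absurd rfl (hsM' _ _ hq'').2
        · rw [Prod.mk.injEq] at he2
          obtain ⟨rfl, rfl⟩ := he2
          exact absurd rfl (hsM' _ _ hp'').1
        · rw [Prod.mk.injEq] at he2'
          obtain ⟨rfl, rfl⟩ := he2'
          exact absurd rfl (hsM' _ _ hp'').2
        · exact hM'.fun1 _ hp'' _ hq'' rfl
      · rintro ⟨x, y⟩ hp ⟨x', y'⟩ hq he
        dsimp only at he
        subst he
        rcases Finset.mem_insert.1 hp with he1 | hp' <;> [skip; rcases Finset.mem_insert.1 hp' with he1' | hp'']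
        all_goals rcases Finset.mem_insert.1 hq with he2 | hq' <;>
          [skip; rcases Finset.mem_insert.1 hq' with he2' | hq'']
        · rw [he1, he2]
        · rw [Prod.mk.injEq] at he1 he2'
          omega
        · rw [Prod.mk.injEq] at he1
          obtain ⟨rfl, rfl⟩ := he1
          exact absurd rfl (htM' _ _ hq'').1
        · rw [Prod.mk.injEq] at he1' he2
          omega
        · rw [he1', he2']
        · rw [Prod.mk.injEq] at he1'
          obtain ⟨rfl, rfl⟩ := he1'
          exact absurd rfl (htM' _ _ hq'').2
        · rw [Prod.mk.injEq] at he2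
          obtain ⟨rfl, rfl⟩ := he2
          exact absurd rfl (htM' _ _ hp'').1
        · rw [Prod.mk.injEq] at he2'
          obtain ⟨rfl, rfl⟩ := he2'
          exact absurd rfl (htM' _ _ hp'').2
        · exact hM'.fun2 _ hp'' _ hq'' rfl
      · intro i
        constructor
        · rintro ⟨j, hj⟩
          rcases Finset.mem_insert.1 hj with he1 | hj'
          · rw [Prod.mk.injEq] at he1
            obtain ⟨rfl, rfl⟩ := he1
            exact Finset.mem_union_left _ ho
          rcases Finset.mem_insert.1 hj' with he1 | hj''
          · rw [Prod.mk.injEq] at he1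
            obtain ⟨rfl, rfl⟩ := he1
            exact Finset.mem_union_right _ (mem_negSet.2 (by simpa using hc))
          · rcases Finset.mem_union.1 ((hM'.src i).1 ⟨j, hj''⟩) with hm | hm
            · exact Finset.mem_union_left _ (Finset.mem_of_mem_erase hm)
            · rw [mem_negSet, Finset.mem_erase] at hm
              exact Finset.mem_union_right _ (mem_negSet.2 hm.2)
        · intro hi
          rcases Finset.mem_union.1 hi with hm | hm
          · by_cases hio : i = o
            · exact ⟨c, by rw [hio]; exact Finset.mem_insert_self _ _⟩
            · obtain ⟨j, hj⟩ := (hM'.src i).2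
                (Finset.mem_union_left _ (Finset.mem_erase.2 ⟨hio, hm⟩))
              exact ⟨j, Finset.mem_insert_of_mem (Finset.mem_insert_of_mem hj)⟩
          · rw [mem_negSet] at hm
            by_cases hic : -i = c
            · refine ⟨-o, ?_⟩
              have : i = -c := by omega
              rw [this]
              exact Finset.mem_insert_of_mem (Finset.mem_insert_self _ _)
            · obtain ⟨j, hj⟩ := (hM'.src i).2
                (Finset.mem_union_right _ (mem_negSet.2 (Finset.mem_erase.2 ⟨hic, hm⟩)))
              exact ⟨j, Finset.mem_insert_of_mem (Finset.mem_insert_of_mem hj)⟩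
      · intro j
        constructor
        · rintro ⟨i, hi⟩
          rcases Finset.mem_insert.1 hi with he1 | hi'
          · rw [Prod.mk.injEq] at he1
            obtain ⟨rfl, rfl⟩ := he1
            exact Finset.mem_union_left _ hc
          rcases Finset.mem_insert.1 hi' with he1 | hi''
          · rw [Prod.mk.injEq] at he1
            obtain ⟨rfl, rfl⟩ := he1
            exact Finset.mem_union_right _ (mem_negSet.2 (by simpa using ho))
          · rcases Finset.mem_union.1 ((hM'.tgt j).1 ⟨i, hi''⟩) with hm | hm
            · exact Finset.mem_union_left _ (Finset.mem_of_mem_erase hm)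
            · rw [mem_negSet, Finset.mem_erase] at hm
              exact Finset.mem_union_right _ (mem_negSet.2 hm.2)
        · intro hj
          rcases Finset.mem_union.1 hj with hm | hm
          · by_cases hjc : j = c
            · exact ⟨o, by rw [hjc]; exact Finset.mem_insert_self _ _⟩
            · obtain ⟨i, hi⟩ := (hM'.tgt j).2
                (Finset.mem_union_left _ (Finset.mem_erase.2 ⟨hjc, hm⟩))
              exact ⟨i, Finset.mem_insert_of_mem (Finset.mem_insert_of_mem hi)⟩
          · rw [mem_negSet] at hm
            by_cases hjo : -j = o
            · refine ⟨-c, ?_⟩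
              have : j = -o := by omega
              rw [this]
              exact Finset.mem_insert_of_mem (Finset.mem_insert_self _ _)
            · obtain ⟨i, hi⟩ := (hM'.tgt j).2
                (Finset.mem_union_right _ (mem_negSet.2 (Finset.mem_erase.2 ⟨hjo, hm⟩)))
              exact ⟨i, Finset.mem_insert_of_mem (Finset.mem_insert_of_mem hi)⟩
      · rintro p hp
        rcases Finset.mem_insert.1 hp with rfl | hp'
        · exact Finset.mem_insert_of_mem (Finset.mem_insert_self _ _)
        rcases Finset.mem_insert.1 hp' with rfl | hp''
        · dsimp only
          rw [neg_neg, neg_neg]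
          exact Finset.mem_insert_self _ _
        · exact Finset.mem_insert_of_mem (Finset.mem_insert_of_mem (hM'.msymm p hp''))
      · rintro p hp q hq hcr
        have hp3 : p = (o, c) ∨ p = (-c, -o) ∨ p ∈ M' := by
          rcases Finset.mem_insert.1 hp with h | h
          · exact Or.inl h
          · rcases Finset.mem_insert.1 h with h | h
            · exact Or.inr (Or.inl h)
            · exact Or.inr (Or.inr h)
        have hq3 : q = (o, c) ∨ q = (-c, -o) ∨ q ∈ M' := by
          rcases Finset.mem_insert.1 hq with h | h
          · exact Or.inl h
          · rcases Finset.mem_insert.1 h with h | h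
            · exact Or.inr (Or.inl h)
            · exact Or.inr (Or.inr h)
        clear hp hq
        rcases hp3 with rfl | rfl | hp'' <;> rcases hq3 with rfl | rfl | hq''
        · exact not_crossRel_self _ hcr
        · exact hooc (Or.inl hcr)
        · exact hnoxoc q hq'' (Or.inl hcr)
        · exact hooc (Or.inr hcr)
        · exact not_crossRel_self _ hcr
        · exact hnegq q hq'' (Or.inl hcr)
        · exact hnoxoc p hp'' (Or.inr hcr)
        · exact hnegq p hp'' (Or.inr hcr)
        · exact hM'.nonx p hp'' q hq'' hcr
    refine ⟨insert (o, c) (insert (-c, -o) M'), hnew, ?_⟩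
    intro N hN
    have hocN : (o, c) ∈ N := xm_forced hOn hCn hN hc hcmin ho holt homax
    have hnegN : (-c, -o) ∈ N := hN.msymm (o, c) hocN
    have hdiff : ((o, c) : ℤ × ℤ) ≠ (-c, -o) := by
      intro he
      rw [Prod.mk.injEq] at he
      omega
    have hN'' : IsXM n (O.erase o) (C.erase c) ((N.erase (o, c)).erase (-c, -o)) := by
      have hmem : ∀ p, p ∈ (N.erase (o, c)).erase (-c, -o) ↔
          (p ∈ N ∧ p ≠ (o, c) ∧ p ≠ (-c, -o)) := by
        intro p
        rw [Finset.mem_erase, Finset.mem_erase]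
        tauto
      constructor
      · exact fun p hp => hN.gd p ((hmem p).1 hp).1
      · exact fun p hp => hN.inc p ((hmem p).1 hp).1
      · exact fun p hp q hq he => hN.fun1 p ((hmem p).1 hp).1 q ((hmem q).1 hq).1 he
      · exact fun p hp q hq he => hN.fun2 p ((hmem p).1 hp).1 q ((hmem q).1 hq).1 he
      · intro i
        constructor
        · rintro ⟨j, hj⟩
          obtain ⟨hjN, hne1, hne2⟩ := (hmem _).1 hj
          have hin : i ∈ O ∪ negSet C := (hN.src i).1 ⟨j, hjN⟩
          rcases Finset.mem_union.1 hin with hm | hm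
          · apply Finset.mem_union_left
            refine Finset.mem_erase.2 ⟨?_, hm⟩
            intro hio
            subst hio
            exact hne1 (hN.fun1 (i, j) hjN (i, c) hocN rfl)
          · apply Finset.mem_union_right
            rw [mem_negSet] at hm ⊢
            refine Finset.mem_erase.2 ⟨?_, hm⟩
            intro hic
            have : i = -c := by omega
            subst this
            exact hne2 (hN.fun1 (-c, j) hjN (-c, -o) hnegN rfl)
        · intro hi
          rcases Finset.mem_union.1 hi with hm | hm
          · rw [Finset.mem_erase] at hm
            obtain ⟨j, hj⟩ := (hN.src i).2 (Finset.mem_union_left _ hm.2)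
            refine ⟨j, (hmem _).2 ⟨hj, ?_, ?_⟩⟩
            · intro he
              rw [Prod.mk.injEq] at he
              exact hm.1 he.1
            · intro he
              rw [Prod.mk.injEq] at he
              have := Finset.mem_Icc.1 (hOn hm.2)
              omega
          · rw [mem_negSet, Finset.mem_erase] at hm
            obtain ⟨j, hj⟩ := (hN.src i).2 (Finset.mem_union_right _ (mem_negSet.2 hm.2))
            refine ⟨j, (hmem _).2 ⟨hj, ?_, ?_⟩⟩
            · intro he
              rw [Prod.mk.injEq] at he
              have := Finset.mem_Icc.1 (hCn hm.2)
              omega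
            · intro he
              rw [Prod.mk.injEq] at he
              exact hm.1 (by omega)
      · intro j
        constructor
        · rintro ⟨i, hi⟩
          obtain ⟨hiN, hne1, hne2⟩ := (hmem _).1 hi
          have hin : j ∈ C ∪ negSet O := (hN.tgt j).1 ⟨i, hiN⟩
          rcases Finset.mem_union.1 hin with hm | hm
          · apply Finset.mem_union_left
            refine Finset.mem_erase.2 ⟨?_, hm⟩
            intro hjc
            subst hjc
            exact hne1 (hN.fun2 (i, j) hiN (o, j) hocN rfl)
          · apply Finset.mem_union_right
            rw [mem_negSet] at hm ⊢
            refine Finset.mem_erase.2 ⟨?_, hm⟩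
            intro hjo
            have : j = -o := by omega
            subst this
            exact hne2 (hN.fun2 (i, -o) hiN (-c, -o) hnegN rfl)
        · intro hj
          rcases Finset.mem_union.1 hj with hm | hm
          · rw [Finset.mem_erase] at hm
            obtain ⟨i, hi⟩ := (hN.tgt j).2 (Finset.mem_union_left _ hm.2)
            refine ⟨i, (hmem _).2 ⟨hi, ?_, ?_⟩⟩
            · intro he
              rw [Prod.mk.injEq] at he
              exact hm.1 he.2
            · intro he
              rw [Prod.mk.injEq] at he
              have := Finset.mem_Icc.1 (hCn hm.2)
              omega
          · rw [mem_negSet, Finset.mem_erase] at hm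
            obtain ⟨i, hi⟩ := (hN.tgt j).2 (Finset.mem_union_right _ (mem_negSet.2 hm.2))
            refine ⟨i, (hmem _).2 ⟨hi, ?_, ?_⟩⟩
            · intro he
              rw [Prod.mk.injEq] at he
              have := Finset.mem_Icc.1 (hOn hm.2)
              omega
            · intro he
              rw [Prod.mk.injEq] at he
              exact hm.1 (by omega)
      · rintro ⟨x, y⟩ hp
        obtain ⟨hpN, hne1, hne2⟩ := (hmem _).1 hp
        refine (hmem _).2 ⟨hN.msymm _ hpN, ?_, ?_⟩
        · intro he
          rw [Prod.mk.injEq] at he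
          apply hne2
          rw [Prod.mk.injEq]
          constructor <;> omega
        · intro he
          rw [Prod.mk.injEq] at he
          apply hne1
          rw [Prod.mk.injEq]
          constructor <;> omega
      · exact fun p hp q hq => hN.nonx p ((hmem p).1 hp).1 q ((hmem q).1 hq).1
    have h1 : (-c, -o) ∈ N.erase (o, c) := Finset.mem_erase.2 ⟨Ne.symm hdiff, hnegN⟩
    rw [← Finset.insert_erase hocN, ← Finset.insert_erase h1, hM'u _ hN'']

/-! ### Counting glue -/

lemma card_negSet_filter (S : Finset ℤ) (P : ℤ → Prop) [DecidablePred P] :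
    ((negSet S).filter P).card = (S.filter (fun x => P (-x))).card := by
  have he : (negSet S).filter P = (S.filter (fun x => P (-x))).image (fun x => -x) := by
    ext y
    rw [Finset.mem_filter, mem_negSet, Finset.mem_image]
    constructor
    · rintro ⟨h1, h2⟩
      exact ⟨-y, Finset.mem_filter.2 ⟨h1, by simpa using h2⟩, neg_neg y⟩
    · rintro ⟨x, hx, rfl⟩
      rw [Finset.mem_filter] at hx
      exact ⟨by simpa using hx.1, hx.2⟩
  rw [he, Finset.card_image_of_injective _ neg_injective]

lemma card_negSet (S : Finset ℤ) : (negSet S).card = S.card :=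
  Finset.card_image_of_injective _ neg_injective

lemma card_filter_union_pn {A B : Finset ℤ} (hA : ∀ x ∈ A, 0 < x) (hB : ∀ x ∈ B, x < 0)
    (P : ℤ → Prop) [DecidablePred P] :
    ((A ∪ B).filter P).card = (A.filter P).card + (B.filter P).card := by
  rw [Finset.filter_union]
  apply Finset.card_union_of_disjoint
  rw [Finset.disjoint_left]
  intro x hx hx'
  have h1 := hA x (Finset.mem_filter.1 hx).1
  have h2 := hB x (Finset.mem_filter.1 hx').1
  omega

lemma nn_neg {S T : Finset ℤ} {M : Finset (ℤ × ℤ)}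
    (hgS : ∀ s ∈ S, Gd n s) (hgT : ∀ t ∈ T, Gd n t)
    (hST : ∀ x : ℤ, x ∈ S ↔ -x ∈ T)
    (h : IsNN n S T M) : IsNN n S T (M.image (fun p => (-p.2, -p.1))) := by
  have hTS : ∀ x : ℤ, x ∈ T ↔ -x ∈ S := by
    intro x
    rw [hST (-x), neg_neg]
  have hgd : ∀ p ∈ M, Gd n p.1 ∧ Gd n p.2 := by
    rintro ⟨x, y⟩ hp
    exact ⟨hgS x ((h.src x).1 ⟨y, hp⟩), hgT y ((h.tgt y).1 ⟨x, hp⟩)⟩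
  constructor
  · rintro q hq
    obtain ⟨⟨p1, p2⟩, hp, rfl⟩ := Finset.mem_image.1 hq
    obtain ⟨hg1, hg2⟩ := hgd _ hp
    have hlt : nestOrd n p1 < nestOrd n p2 := h.inc (p1, p2) hp
    have hh1 : Gd n p1 := hg1
    have hh2 : Gd n p2 := hg2
    dsimp only
    rw [nu_flip hh2, nu_flip hh1]
    omega
  · rintro q hq q' hq' he
    obtain ⟨⟨p1, p2⟩, hp, rfl⟩ := Finset.mem_image.1 hq
    obtain ⟨⟨p1', p2'⟩, hp', rfl⟩ := Finset.mem_image.1 hq'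
    dsimp only at he ⊢
    have := h.fun2 (p1, p2) hp (p1', p2') hp' (show p2 = p2' by omega)
    rw [Prod.mk.injEq] at this
    rw [this.1, this.2]
  · rintro q hq q' hq' he
    obtain ⟨⟨p1, p2⟩, hp, rfl⟩ := Finset.mem_image.1 hq
    obtain ⟨⟨p1', p2'⟩, hp', rfl⟩ := Finset.mem_image.1 hq'
    dsimp only at he ⊢
    have := h.fun1 (p1, p2) hp (p1', p2') hp' (show p1 = p1' by omega)
    rw [Prod.mk.injEq] at this
    rw [this.1, this.2]
  · intro i
    constructor
    · rintro ⟨j, hj⟩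
      obtain ⟨⟨p1, p2⟩, hp, he⟩ := Finset.mem_image.1 hj
      rw [Prod.mk.injEq] at he
      have : p2 ∈ T := (h.tgt p2).1 ⟨p1, hp⟩
      rw [hTS] at this
      dsimp only at he
      rwa [he.1] at this
    · intro hi
      rw [hST] at hi
      obtain ⟨x, hx⟩ := (h.tgt (-i)).2 hi
      exact ⟨-x, Finset.mem_image.2 ⟨(x, -i), hx, by simp⟩⟩
  · intro j
    constructor
    · rintro ⟨i, hi⟩
      obtain ⟨⟨p1, p2⟩, hp, he⟩ := Finset.mem_image.1 hi
      rw [Prod.mk.injEq] at he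
      have : p1 ∈ S := (h.src p1).1 ⟨p2, hp⟩
      rw [hST] at this
      dsimp only at he
      rwa [he.2] at this
    · intro hj
      rw [hTS] at hj
      obtain ⟨y, hy⟩ := (h.src (-j)).2 hj
      exact ⟨-y, Finset.mem_image.2 ⟨(-j, y), hy, by simp⟩⟩
  · rintro q hq q' hq' hnest
    obtain ⟨⟨p1, p2⟩, hp, rfl⟩ := Finset.mem_image.1 hq
    obtain ⟨⟨p1', p2'⟩, hp', rfl⟩ := Finset.mem_image.1 hq'
    obtain ⟨hg1, hg2⟩ := hgd _ hp
    obtain ⟨hg1', hg2'⟩ := hgd _ hp'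
    rw [nestRel_neg hg1 hg2 hg1' hg2'] at hnest
    exact h.nonn _ hp _ hp' hnest

end RSAux

open RSAux

theorem stmt6 (n : ℕ) (hn : 0 < n) (O C : Finset ℤ)
    (hO : O ⊆ Finset.Icc 1 (n : ℤ)) (hC : C ⊆ Finset.Icc 1 (n : ℤ))
    (hdom : ∀ k : ℕ, k < n →
      (C ∩ Finset.Icc 1 ((k : ℤ) + 1)).card ≤ (O ∩ Finset.Icc 1 (k : ℤ)).card) :
    (∃! P : SetPartitionC n, P.crossings = 0 ∧ P.openers = O ∧ P.closers = C) ∧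
    (∃! P : SetPartitionC n, P.nestings = 0 ∧ P.openers = O ∧ P.closers = C) := by
  have hgO : ∀ x ∈ O, 1 ≤ x ∧ x ≤ (n : ℤ) := fun x hx => Finset.mem_Icc.1 (hO hx)
  have hgC : ∀ x ∈ C, 1 ≤ x ∧ x ≤ (n : ℤ) := fun x hx => Finset.mem_Icc.1 (hC hx)
  have hdomP : ∀ c : ℤ, 1 ≤ c → c ≤ (n : ℤ) →
      (C.filter (fun t => t ≤ c)).card ≤ (O.filter (fun s => s < c)).card := by
    intro c h1 h2
    have hk : (((c - 1).toNat : ℤ)) = c - 1 := Int.toNat_of_nonneg (by omega)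
    have hkn : (c - 1).toNat < n := by omega
    have hd := hdom (c - 1).toNat hkn
    have e1 : C ∩ Finset.Icc 1 (((c - 1).toNat : ℤ) + 1) = C.filter (fun t => t ≤ c) := by
      ext t
      rw [Finset.mem_inter, Finset.mem_Icc, Finset.mem_filter]
      constructor
      · rintro ⟨h3, _, h5⟩
        exact ⟨h3, by omega⟩
      · rintro ⟨h3, h4⟩
        have := hgC t h3
        exact ⟨h3, by omega, by omega⟩
    have e2 : O ∩ Finset.Icc 1 ((c - 1).toNat : ℤ) = O.filter (fun s => s < c) := by
      ext t
      rw [Finset.mem_inter, Finset.mem_Icc, Finset.mem_filter]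
      constructor
      · rintro ⟨h3, _, h5⟩
        exact ⟨h3, by omega⟩
      · rintro ⟨h3, h4⟩
        have := hgO t h3
        exact ⟨h3, by omega, by omega⟩
    rw [e1, e2] at hd
    exact hd
  constructor
  · -- non-crossing part
    obtain ⟨Mx, hMx, hMxu⟩ := xm_core hn C.card O C rfl hO hC hdomP
    have hzero : ∀ j j' : ℤ, 0 < j → 0 < j' → (j, -j) ∈ Mx → (j', -j') ∈ Mx → j = j' := by
      intro j j' hj hj' hm hm'
      by_contra hne
      have g1 := (hMx.gd _ hm).1
      have g2 := (hMx.gd _ hm').1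
      rcases lt_or_gt_of_ne hne with hlt | hlt
      · apply hMx.nonx _ hm _ hm'
        rw [CrossRel, cpr_pn hj g1.2.2 (by omega), cpr_pn hj' g2.2.2 (by omega)]
        dsimp only
        have := g2.2.2
        omega
      · apply hMx.nonx _ hm' _ hm
        rw [CrossRel, cpr_pn hj' g2.2.2 (by omega), cpr_pn hj g1.2.2 (by omega)]
        dsimp only
        have := g1.2.2
        omega
    have cm : IsCMatch n Mx := ⟨hMx.gd, hMx.inc, hMx.fun1, hMx.fun2, hMx.msymm, hzero⟩
    refine ⟨buildP n Mx cm, ⟨buildP_crossings cm hMx.nonx,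
      buildP_openers cm hO hC hMx.src, buildP_closers cm hO hC hMx.tgt⟩, ?_⟩
    rintro P ⟨hcr0, hop, hcl⟩
    have hnx : ∀ p ∈ P.arcs, ∀ q ∈ P.arcs, ¬ CrossRel n p q := by
      intro p hp q hq hcr
      have h0 : ((P.arcs ×ˢ P.arcs).filter fun r => CrossRel n r.1 r.2) = ∅ :=
        Finset.card_eq_zero.1 hcr0
      have hmem : (p, q) ∈ (P.arcs ×ˢ P.arcs).filter fun r => CrossRel n r.1 r.2 :=
        Finset.mem_filter.2 ⟨Finset.mem_product.2 ⟨hp, hq⟩, hcr⟩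
      rw [h0] at hmem
      exact absurd hmem (Finset.notMem_empty _)
    have hcm' := arcs_cmatch P
    have harc : P.arcs = Mx := hMxu P.arcs
      ⟨hcm'.gd, hcm'.inc, hcm'.fun1, hcm'.fun2, arcs_src hO hC hop hcl,
        arcs_tgt hO hC hop hcl, hcm'.msymm, hnx⟩
    apply eq_of_arcs_eq
    rw [harc, buildP_arcs]
  · -- non-nesting part
    have hgS : ∀ s ∈ O ∪ negSet C, Gd n s := by
      intro s hs
      rcases Finset.mem_union.1 hs with h | h
      · exact gd_of_Icc hn (hO h)
      · have := gd_neg (gd_of_Icc hn (hC (mem_negSet.1 h)))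
        rwa [neg_neg] at this
    have hgT : ∀ t ∈ C ∪ negSet O, Gd n t := by
      intro t ht
      rcases Finset.mem_union.1 ht with h | h
      · exact gd_of_Icc hn (hC h)
      · have := gd_neg (gd_of_Icc hn (hO (mem_negSet.1 h)))
        rwa [neg_neg] at this
    have hST : ∀ x : ℤ, x ∈ O ∪ negSet C ↔ -x ∈ C ∪ negSet O := by
      intro x
      simp only [Finset.mem_union, mem_negSet, neg_neg]
      tauto
    have hdO : Disjoint O (negSet C) := by
      rw [Finset.disjoint_left]
      intro x hx hx'
      have := hgO x hx
      have := hgC (-x) (mem_negSet.1 hx')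
      omega
    have hdC : Disjoint C (negSet O) := by
      rw [Finset.disjoint_left]
      intro x hx hx'
      have := hgC x hx
      have := hgO (-x) (mem_negSet.1 hx')
      omega
    have hcard : (O ∪ negSet C).card = (C ∪ negSet O).card := by
      rw [Finset.card_union_of_disjoint hdO, Finset.card_union_of_disjoint hdC,
        card_negSet, card_negSet]
      omega
    have hdomF : ∀ p : ℤ, ((C ∪ negSet O).filter (fun t => nestOrd n t ≤ p)).card ≤
        ((O ∪ negSet C).filter (fun s => nestOrd n s < p)).card := by
      intro p
      rw [card_filter_union_pn (fun x hx => by have := hgC x hx; omega)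
        (fun x hx => by have := hgO (-x) (mem_negSet.1 hx); omega),
        card_filter_union_pn (fun x hx => by have := hgO x hx; omega)
        (fun x hx => by have := hgC (-x) (mem_negSet.1 hx); omega),
        card_negSet_filter, card_negSet_filter]
      have e1 : C.filter (fun t => nestOrd n t ≤ p) = C.filter (fun t => t ≤ p) :=
        Finset.filter_congr (fun x hx => by
          rw [nu_of_pos (show (0:ℤ) < x by have := hgC x hx; omega)])
      have e2 : O.filter (fun x => nestOrd n (-x) ≤ p) =
          O.filter (fun x => 2 * (n : ℤ) + 1 - x ≤ p) :=
        Finset.filter_congr (fun x hx => by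
          rw [nu_of_neg (show -x < 0 by have := hgO x hx; omega)]
          constructor <;> intro <;> omega)
      have e3 : O.filter (fun s => nestOrd n s < p) = O.filter (fun s => s < p) :=
        Finset.filter_congr (fun x hx => by
          rw [nu_of_pos (show (0:ℤ) < x by have := hgO x hx; omega)])
      have e4 : C.filter (fun x => nestOrd n (-x) < p) =
          C.filter (fun x => 2 * (n : ℤ) + 1 - x < p) :=
        Finset.filter_congr (fun x hx => by
          rw [nu_of_neg (show -x < 0 by have := hgC x hx; omega)]
          constructor <;> intro <;> omega)
      rw [e1, e2, e3, e4]
      by_cases hp : p ≤ (n : ℤ)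
      · have eO2 : O.filter (fun x => 2 * (n : ℤ) + 1 - x ≤ p) = ∅ :=
          Finset.filter_eq_empty_iff.2 (fun {x} hx => by have := hgO x hx; omega)
        have hbound : (C.filter (fun t => t ≤ p)).card ≤ (O.filter (fun s => s < p)).card := by
          by_cases h1p : 1 ≤ p
          · exact hdomP p h1p hp
          · have : C.filter (fun t => t ≤ p) = ∅ :=
              Finset.filter_eq_empty_iff.2 (fun {t} ht => by have := hgC t ht; omega)
            rw [this]
            simp
        rw [eO2]
        simp only [Finset.card_empty]
        omega
      · have eC : C.filter (fun t => t ≤ p) = C :=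
          Finset.filter_true_of_mem (fun t ht => by have := hgC t ht; omega)
        have eO : O.filter (fun s => s < p) = O :=
          Finset.filter_true_of_mem (fun s hs => by have := hgO s hs; omega)
        have sC := Finset.card_filter_add_card_filter_not
          (s := C) (p := fun t => 2 * (n : ℤ) + 1 - t < p)
        have e5 : C.filter (fun t => ¬(2 * (n : ℤ) + 1 - t < p)) =
            C.filter (fun t => t ≤ 2 * (n : ℤ) + 1 - p) :=
          Finset.filter_congr (fun x _ => by constructor <;> intro <;> omega)
        rw [e5] at sC
        have sO := Finset.card_filter_add_card_filter_not
          (s := O) (p := fun x => 2 * (n : ℤ) + 1 - x ≤ p)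
        have e6 : O.filter (fun x => ¬(2 * (n : ℤ) + 1 - x ≤ p)) =
            O.filter (fun x => x < 2 * (n : ℤ) + 1 - p) :=
          Finset.filter_congr (fun x _ => by constructor <;> intro <;> omega)
        rw [e6] at sO
        have hsub : (C.filter (fun t => t ≤ 2 * (n : ℤ) + 1 - p)).card ≤
            (O.filter (fun x => x < 2 * (n : ℤ) + 1 - p)).card := by
          by_cases hq1 : 1 ≤ 2 * (n : ℤ) + 1 - p
          · exact hdomP _ hq1 (by omega)
          · have : C.filter (fun t => t ≤ 2 * (n : ℤ) + 1 - p) = ∅ :=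
              Finset.filter_eq_empty_iff.2 (fun {t} ht => by have := hgC t ht; omega)
            rw [this]
            simp
        rw [eC, eO]
        omega
    obtain ⟨Mn, hMn, hMnu⟩ := nn_core (C ∪ negSet O).card (O ∪ negSet C) (C ∪ negSet O)
      rfl hcard hgS hgT hdomF
    have hsymm : ∀ p ∈ Mn, (-p.2, -p.1) ∈ Mn := by
      have he := hMnu _ (nn_neg hgS hgT hST hMn)
      intro p hp
      rw [← he]
      exact Finset.mem_image.2 ⟨p, hp, rfl⟩
    have hgd : ∀ p ∈ Mn, Gd n p.1 ∧ Gd n p.2 := by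
      rintro ⟨x, y⟩ hp
      exact ⟨hgS x ((hMn.src x).1 ⟨y, hp⟩), hgT y ((hMn.tgt y).1 ⟨x, hp⟩)⟩
    have hzero : ∀ j j' : ℤ, 0 < j → 0 < j' → (j, -j) ∈ Mn → (j', -j') ∈ Mn → j = j' := by
      intro j j' hj hj' hm hm'
      by_contra hne
      have g1 := (hgd _ hm).1
      have g2 := (hgd _ hm').1
      rcases lt_or_gt_of_ne hne with hlt | hlt
      · refine hMn.nonn _ hm _ hm' ⟨?_, ?_⟩ <;> dsimp only
        · rw [nu_of_pos hj, nu_of_pos hj']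
          omega
        · rw [nu_of_neg (by omega : -j < 0), nu_of_neg (by omega : -j' < 0)]
          omega
      · refine hMn.nonn _ hm' _ hm ⟨?_, ?_⟩ <;> dsimp only
        · rw [nu_of_pos hj, nu_of_pos hj']
          omega
        · rw [nu_of_neg (by omega : -j < 0), nu_of_neg (by omega : -j' < 0)]
          omega
    have cm : IsCMatch n Mn := ⟨hgd, hMn.inc, hMn.fun1, hMn.fun2, hsymm, hzero⟩
    refine ⟨buildP n Mn cm, ⟨buildP_nestings cm hMn.nonn,
      buildP_openers cm hO hC hMn.src, buildP_closers cm hO hC hMn.tgt⟩, ?_⟩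
    rintro P ⟨hns0, hop, hcl⟩
    have hnn : ∀ p ∈ P.arcs, ∀ q ∈ P.arcs, ¬ NestRel n p q := by
      intro p hp q hq hcr
      have h0 : ((P.arcs ×ˢ P.arcs).filter fun r => NestRel n r.1 r.2) = ∅ :=
        Finset.card_eq_zero.1 hns0
      have hmem : (p, q) ∈ (P.arcs ×ˢ P.arcs).filter fun r => NestRel n r.1 r.2 :=
        Finset.mem_filter.2 ⟨Finset.mem_product.2 ⟨hp, hq⟩, hcr⟩
      rw [h0] at hmem
      exact absurd hmem (Finset.notMem_empty _)
    have hcm' := arcs_cmatch P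
    have harc : P.arcs = Mn := hMnu P.arcs
      ⟨hcm'.inc, hcm'.fun1, hcm'.fun2, arcs_src hO hC hop hcl,
        arcs_tgt hO hC hop hcl, hnn⟩
    apply eq_of_arcs_eq
    rw [harc, buildP_arcs]
end
end

section
/- Let 𝓑 be a set partition of type C_n and let (i,j) and (i',j') be two distinct arcs of 𝓑 such that i and i' are positive and j and j' are negative. Then (i,j) and (i',j') form a crossing if and only if they form a nesting. -/
open scoped Classical
noncomputable section

theorem stmt7 (n : ℕ) (P : SetPartitionC n) (p q : ℤ × ℤ)
    (hp : p ∈ P.arcs) (hq : q ∈ P.arcs) (hne : p ≠ q)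
    (hp1 : 0 < p.1) (hp2 : p.2 < 0) (hq1 : 0 < q.1) (hq2 : q.2 < 0) :
    Crosses n p q ↔ Nests n p q := by
  simp only [SetPartitionC.arcs, Finset.mem_filter, Finset.mem_product, SetPartitionC.pmn,
    Finset.mem_erase, Finset.mem_Icc] at hp hq
  obtain ⟨⟨⟨_, _, hpa⟩, _, hpb, _⟩, _⟩ := hp
  obtain ⟨⟨⟨_, _, hqa⟩, _, hqb, _⟩, _⟩ := hq
  unfold Crosses Nests CrossRel NestRel cpr crossOrd nestOrd
  simp only [if_pos hp1, if_pos hq1, if_neg (not_lt.mpr hp2.le), if_neg (not_lt.mpr hq2.le)]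
  omega
end
end

section
/- Let 𝓑 be a set partition of type C_n. Then (a) no set of pairwise crossing arcs of 𝓑 contains both an arc with both elements positive and an arc with both elements negative; (b) if M = {(o₁,c₁),…,(o_k,c_k)} is a set of pairwise crossing arcs of 𝓑, then {(−c₁,−o₁),…,(−c_k,−o_k)} is also a set of pairwise crossing arcs of 𝓑 of the same cardinality; and consequently (c) there exists a set of pairwise crossing arcs of maximal cardinality all of whose arcs have a positive opener. -/
open scoped Classical
noncomputable section

/-! In the crossing order, `i ↦ -i` is the rotation of the `2n`-gon by `n` positions; it maps
arcs to arcs (reversing them) and preserves crossings. Arcs with both ends positive occupy the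
first half `1,…,n` of the crossing order and arcs with both ends negative the second half, so the
two kinds never cross. Hence if a maximum crossing contains an arc with negative opener, all of its
arcs have negative closers, and its rotation is a maximum crossing whose openers are positive. -/

namespace SetPartitionC

variable {n : ℕ} {P : SetPartitionC n}

def IsCrossing (n : ℕ) (S : Finset (ℤ × ℤ)) : Prop :=
  ∀ a ∈ S, ∀ b ∈ S, a ≠ b → Crosses n a b

def negSwap (p : ℤ × ℤ) : ℤ × ℤ := (-p.2, -p.1)

theorem negSwap_injective : Function.Injective negSwap := fun p q h => by
  simp only [negSwap, Prod.mk.injEq, neg_inj] at h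
  exact Prod.ext h.2 h.1

theorem mem_pmn {i : ℤ} : i ∈ pmn n ↔ i ≠ 0 ∧ -(n : ℤ) ≤ i ∧ i ≤ n := by
  simp [pmn]

theorem neg_mem_pmn {i : ℤ} (hi : i ∈ pmn n) : -i ∈ pmn n := by
  rw [mem_pmn] at hi ⊢
  omega

theorem mem_pmn_of_mem_blocks {B : Finset ℤ} (hB : B ∈ P.blocks) {i : ℤ} (hi : i ∈ B) :
    i ∈ pmn n := by
  have := (P.cover i).mp ⟨B, hB, hi⟩
  rw [abs_le] at this
  exact mem_pmn.mpr ⟨this.1, this.2⟩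

theorem mem_arcs {p : ℤ × ℤ} : p ∈ P.arcs ↔ p.1 ∈ pmn n ∧ p.2 ∈ pmn n ∧ P.IsArc p.1 p.2 := by
  simp [arcs, and_assoc]

theorem nestOrd_neg {i : ℤ} (hi : i ∈ pmn n) : nestOrd n (-i) = 2 * n + 1 - nestOrd n i := by
  rw [mem_pmn] at hi
  simp only [nestOrd]
  split_ifs <;> omega

theorem crossOrd_of_pos {i : ℤ} (h : 0 < i) : crossOrd n i = i := if_pos h

theorem crossOrd_of_neg {i : ℤ} (h : i < 0) : crossOrd n i = n - i := if_neg (by omega)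

theorem snd_neg_of_fst_neg {p : ℤ × ℤ} (hp : p ∈ P.arcs) (h : p.1 < 0) : p.2 < 0 := by
  obtain ⟨h1, h2, hlt, -⟩ := mem_arcs.mp hp
  rw [mem_pmn] at h1 h2
  simp only [nestOrd] at hlt
  split_ifs at hlt <;> omega

theorem negSwap_mem_arcs {p : ℤ × ℤ} (hp : p ∈ P.arcs) : negSwap p ∈ P.arcs := by
  obtain ⟨h1, h2, hlt, B, hB, hp1, hp2, hgap⟩ := mem_arcs.mp hp
  refine mem_arcs.mpr ⟨neg_mem_pmn h2, neg_mem_pmn h1, ?_, negSet B, P.symm B hB,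
    Finset.mem_image_of_mem _ hp2, Finset.mem_image_of_mem _ hp1, ?_⟩
  · dsimp only [negSwap]
    rw [nestOrd_neg h1, nestOrd_neg h2]
    omega
  · rintro _ hk'
    obtain ⟨k, hk, rfl⟩ := Finset.mem_image.mp hk'
    dsimp only [negSwap]
    rw [nestOrd_neg h1, nestOrd_neg h2, nestOrd_neg (mem_pmn_of_mem_blocks hB hk)]
    have := hgap k hk
    omega

theorem image_negSwap_subset_arcs {M : Finset (ℤ × ℤ)} (hM : M ⊆ P.arcs) :
    M.image negSwap ⊆ P.arcs :=
  Finset.image_subset_iff.mpr fun _ hp => negSwap_mem_arcs (hM hp)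

theorem crosses_negSwap_of_crossRel {p q : ℤ × ℤ} (hp1 : p.1 ∈ pmn n) (hp2 : p.2 ∈ pmn n)
    (hq1 : q.1 ∈ pmn n) (hq2 : q.2 ∈ pmn n) (h : CrossRel n p q) :
    Crosses n (negSwap p) (negSwap q) := by
  obtain ⟨a, b⟩ := p
  obtain ⟨c, d⟩ := q
  simp only [mem_pmn] at hp1 hp2 hq1 hq2
  simp only [Crosses, CrossRel, cpr, negSwap] at h ⊢
  rcases lt_or_gt_of_ne hp1.1 with ha | ha <;> rcases lt_or_gt_of_ne hp2.1 with hb | hb <;>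
  rcases lt_or_gt_of_ne hq1.1 with hc | hc <;> rcases lt_or_gt_of_ne hq2.1 with hd | hd <;>
  simp only [crossOrd_of_pos, crossOrd_of_neg, ha, hb, hc, hd, neg_pos, neg_lt_zero] at h ⊢ <;>
  omega

theorem crosses_negSwap {p q : ℤ × ℤ} (hp : p ∈ P.arcs) (hq : q ∈ P.arcs) (h : Crosses n p q) :
    Crosses n (negSwap p) (negSwap q) := by
  obtain ⟨hp1, hp2, -⟩ := mem_arcs.mp hp
  obtain ⟨hq1, hq2, -⟩ := mem_arcs.mp hq
  rcases h with h | h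
  · exact crosses_negSwap_of_crossRel hp1 hp2 hq1 hq2 h
  · exact (crosses_negSwap_of_crossRel hq1 hq2 hp1 hp2 h).symm

theorem not_crosses_of_pos_of_neg {p q : ℤ × ℤ} (hp1 : 0 < p.1) (hp2 : 0 < p.2)
    (hp1n : p.1 ≤ n) (hp2n : p.2 ≤ n) (hq1 : q.1 < 0) (hq2 : q.2 < 0) : ¬Crosses n p q := by
  simp only [Crosses, CrossRel, cpr, crossOrd_of_pos hp1, crossOrd_of_pos hp2,
    crossOrd_of_neg hq1, crossOrd_of_neg hq2]
  omega

theorem IsCrossing.not_pos_and_neg {S : Finset (ℤ × ℤ)} (hS : S ⊆ P.arcs)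
    (hcross : IsCrossing n S) :
    ¬((∃ p ∈ S, 0 < p.1 ∧ 0 < p.2) ∧ (∃ q ∈ S, q.1 < 0 ∧ q.2 < 0)) := by
  rintro ⟨⟨p, hpS, hp1, hp2⟩, ⟨q, hqS, hq1, hq2⟩⟩
  obtain ⟨hp1', hp2', -⟩ := mem_arcs.mp (hS hpS)
  rw [mem_pmn] at hp1' hp2'
  refine not_crosses_of_pos_of_neg hp1 hp2 hp1'.2.2 hp2'.2.2 hq1 hq2 (hcross p hpS q hqS ?_)
  rintro rfl
  omega

theorem IsCrossing.image_negSwap {M : Finset (ℤ × ℤ)} (hM : M ⊆ P.arcs)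
    (hcross : IsCrossing n M) : IsCrossing n (M.image negSwap) := by
  simp only [IsCrossing, Finset.forall_mem_image]
  intro p hp q hq hpq
  exact crosses_negSwap (hM hp) (hM hq) (hcross p hp q hq fun h => hpq (h ▸ rfl))

theorem exists_isCrossing_card_eq_maxCrossing (P : SetPartitionC n) :
    ∃ M ⊆ P.arcs, IsCrossing n M ∧ M.card = P.maxCrossing := by
  obtain ⟨M, hM, hcard⟩ := Finset.exists_mem_eq_sup
    (P.arcs.powerset.filter fun S => ∀ a ∈ S, ∀ b ∈ S, a ≠ b → Crosses n a b) ⟨∅, by simp⟩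
    Finset.card
  simp only [Finset.mem_filter, Finset.mem_powerset] at hM
  exact ⟨M, hM.1, hM.2, hcard.symm⟩

theorem exists_isCrossing_card_eq_maxCrossing_fst_pos (P : SetPartitionC n) :
    ∃ M ⊆ P.arcs, IsCrossing n M ∧ M.card = P.maxCrossing ∧ ∀ p ∈ M, 0 < p.1 := by
  obtain ⟨M, hM, hcross, hcard⟩ := exists_isCrossing_card_eq_maxCrossing P
  by_cases hneg : ∃ q ∈ M, q.1 < 0
  · obtain ⟨q, hqM, hq1⟩ := hneg
    have hclosers : ∀ p ∈ M, p.2 < 0 := fun p hp => by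
      obtain ⟨hp1, hp2, -⟩ := mem_arcs.mp (hM hp)
      rw [mem_pmn] at hp1 hp2
      rcases hp1.1.lt_or_gt with h1 | h1
      · exact snd_neg_of_fst_neg (hM hp) h1
      · refine hp2.1.lt_or_gt.resolve_right fun h2 => hcross.not_pos_and_neg hM
          ⟨⟨p, hp, h1, h2⟩, q, hqM, hq1, snd_neg_of_fst_neg (hM hqM) hq1⟩
    refine ⟨M.image negSwap, image_negSwap_subset_arcs hM, hcross.image_negSwap hM, ?_, ?_⟩
    · rw [Finset.card_image_of_injective _ negSwap_injective, hcard]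
    · simp only [Finset.forall_mem_image, negSwap, neg_pos]
      exact hclosers
  · push Not at hneg
    exact ⟨M, hM, hcross, hcard, fun p hp =>
      (hneg p hp).lt_of_ne' (mem_pmn.mp (mem_arcs.mp (hM hp)).1).1⟩

end SetPartitionC

theorem stmt15 (n : ℕ) (P : SetPartitionC n) :
    (∀ S : Finset (ℤ × ℤ), S ⊆ P.arcs →
      (∀ a ∈ S, ∀ b ∈ S, a ≠ b → Crosses n a b) →
      ¬((∃ p ∈ S, 0 < p.1 ∧ 0 < p.2) ∧ (∃ q ∈ S, q.1 < 0 ∧ q.2 < 0))) ∧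
    (∀ M : Finset (ℤ × ℤ), M ⊆ P.arcs →
      (∀ a ∈ M, ∀ b ∈ M, a ≠ b → Crosses n a b) →
      (M.image (fun p => (-p.2, -p.1)) ⊆ P.arcs ∧
       (∀ a ∈ M.image (fun p => (-p.2, -p.1)), ∀ b ∈ M.image (fun p => (-p.2, -p.1)),
          a ≠ b → Crosses n a b) ∧
       (M.image (fun p => (-p.2, -p.1))).card = M.card)) ∧
    (∃ M : Finset (ℤ × ℤ), M ⊆ P.arcs ∧
      (∀ a ∈ M, ∀ b ∈ M, a ≠ b → Crosses n a b) ∧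
      M.card = P.maxCrossing ∧ ∀ p ∈ M, 0 < p.1) := by
  refine ⟨fun S hS hcross => SetPartitionC.IsCrossing.not_pos_and_neg hS hcross,
    fun M hM hcross => ⟨SetPartitionC.image_negSwap_subset_arcs hM,
      SetPartitionC.IsCrossing.image_negSwap hM hcross,
      Finset.card_image_of_injective _ SetPartitionC.negSwap_injective⟩,
    SetPartitionC.exists_isCrossing_card_eq_maxCrossing_fst_pos P⟩
end
end
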